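/- arXiv:0705.2220 — 5 statements merged into one kernel-verified Lean document; each statement's English description precedes it below -/
import Mathlib

section
/- Let X be a Polish space with a complete metric d and let μ be a Borel probability measure on X. Then there exists a G_δ subset X^♯ ⊆ X with μ(X^♯) = 1 whose subspace topology is fractured, i.e. has a countable base consisting of subsets that are clopen in X^♯. Moreover, if T is a measure-preserving homeomorphism of (X, μ), then X' = ⋂_{n ∈ ℤ} T^n X^♯ is a T-invariant G_δ subset of X of full measure whose subspace topology is fractured. -/
/-
Fix a countable dense set `C` of centres. For each `c ∈ C` only countably many spheres `S(c, r)`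
can have positive measure, so there is a countable dense set `R` of radii for which all spheres
`S(c, r)`, `c ∈ C`, `r ∈ R`, are null. Removing these countably many closed null sets leaves a
`Gδ` set of full measure in which each ball `B(c, r)`, `c ∈ C`, `r ∈ R`, coincides with the
closed ball, hence is clopen, and these balls still form a base. The invariant part follows
because the iterates `Tⁿ` are homeomorphisms preserving `μ`, and a subspace of a fractured space
is fractured.
-/

open MeasureTheory Set TopologicalSpace

def Fractured (X : Type*) [TopologicalSpace X] : Prop :=
  ∃ B : Set (Set X), B.Countable ∧ (∀ s ∈ B, IsClopen s) ∧ IsTopologicalBasis B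

open Metric

theorem Fractured.of_isInducing {Y Z : Type*} [TopologicalSpace Y] [TopologicalSpace Z]
    {f : Y → Z} (hf : Topology.IsInducing f) (h : Fractured Z) : Fractured Y := by
  obtain ⟨B, hBc, hB_clopen, hB⟩ := h
  refine ⟨(f ⁻¹' ·) '' B, hBc.image _, ?_, hB.isInducing hf⟩
  rintro _ ⟨t, ht, rfl⟩
  exact (hB_clopen t ht).preimage hf.continuous

theorem Fractured.mono {X : Type*} [TopologicalSpace X] {s t : Set X} (hst : s ⊆ t)
    (ht : Fractured t) : Fractured s :=
  ht.of_isInducing (Topology.IsEmbedding.inclusion hst).isInducing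

section PseudoMetric

variable {X : Type*} [PseudoMetricSpace X]

theorem isTopologicalBasis_image2_ball {C : Set X} (hC : Dense C) {R : Set ℝ} (hR : Dense R) :
    IsTopologicalBasis (image2 ball C R) := by
  refine isTopologicalBasis_of_isOpen_of_nhds (by rintro _ ⟨c, -, r, -, rfl⟩; exact isOpen_ball) ?_
  intro y U hyU hU
  obtain ⟨ε, hε, hyεU⟩ := Metric.isOpen_iff.1 hU y hyU
  obtain ⟨c, hyc, hcC⟩ := Metric.dense_iff.1 hC y (ε / 3) (by positivity)
  rw [mem_ball, dist_comm] at hyc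
  obtain ⟨r, hrR, hyr, hrε⟩ := hR.exists_between (show dist y c < ε / 2 by linarith)
  refine ⟨ball c r, mem_image2_of_mem hcC hrR, mem_ball.2 hyr, ?_⟩
  refine (ball_subset_ball' ?_).trans hyεU
  rw [dist_comm]
  linarith

theorem fractured_biInter_compl_sphere {C : Set X} (hCc : C.Countable) (hC : Dense C)
    {R : Set ℝ} (hRc : R.Countable) (hR : Dense R) :
    Fractured (⋂ c ∈ C, ⋂ r ∈ R, (sphere c r)ᶜ : Set X) := by
  set Y : Set X := ⋂ c ∈ C, ⋂ r ∈ R, (sphere c r)ᶜ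
  refine ⟨((↑) ⁻¹' ·) '' image2 ball C R, (hCc.image2 hRc _).image _, ?_,
    (isTopologicalBasis_image2_ball hC hR).isInducing .subtypeVal⟩
  rintro _ ⟨_, ⟨c, hc, r, hr, rfl⟩, rfl⟩
  have ball_eq_closedBall : ((↑) ⁻¹' ball c r : Set Y) = (↑) ⁻¹' closedBall c r := by
    ext ⟨y, hy⟩
    have hyr : dist y c ≠ r := by simpa using mem_iInter₂.1 (mem_iInter₂.1 hy c hc) r hr
    simp only [mem_preimage, mem_ball, mem_closedBall]
    exact ⟨le_of_lt, fun h => h.lt_of_ne hyr⟩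
  refine ⟨?_, isOpen_ball.preimage continuous_subtype_val⟩
  dsimp only
  rw [ball_eq_closedBall]
  exact isClosed_closedBall.preimage continuous_subtype_val

variable [MeasurableSpace X] [OpensMeasurableSpace X] (μ : Measure X) [SFinite μ]

theorem exists_countable_dense_measure_sphere_eq_zero {C : Set X} (hC : C.Countable) :
    ∃ R : Set ℝ, R.Countable ∧ Dense R ∧ ∀ c ∈ C, ∀ r ∈ R, μ (sphere c r) = 0 := by
  have hbad : (⋃ c ∈ C, {r : ℝ | 0 < μ (sphere c r)}).Countable :=
    hC.biUnion fun c _ =>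
      Measure.countable_meas_level_set_pos (continuous_id.dist continuous_const).measurable
  obtain ⟨R, hR_good, hRc, hRd⟩ := (hbad.dense_compl ℝ).exists_countable_dense_subset
  refine ⟨R, hRc, hRd, fun c hc r hr => ?_⟩
  have hr_good := hR_good hr
  simp only [mem_compl_iff, mem_iUnion, mem_ofPred_eq, pos_iff_ne_zero, not_exists,
    not_not] at hr_good
  exact hr_good c hc

theorem exists_isGδ_measure_compl_eq_zero_fractured [SeparableSpace X] :
    ∃ Y : Set X, IsGδ Y ∧ μ Yᶜ = 0 ∧ Fractured Y := by
  obtain ⟨C, hCc, hCd⟩ := exists_countable_dense X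
  obtain ⟨R, hRc, hRd, hnull⟩ := exists_countable_dense_measure_sphere_eq_zero μ hCc
  refine ⟨⋂ c ∈ C, ⋂ r ∈ R, (sphere c r)ᶜ, ?_, ?_, fractured_biInter_compl_sphere hCc hCd hRc hRd⟩
  · exact .biInter hCc fun c _ => .biInter hRc fun r _ => isClosed_sphere.isOpen_compl.isGδ
  · simp only [compl_iInter, compl_compl]
    exact (measure_biUnion_null_iff hCc).2 fun c hc => (measure_biUnion_null_iff hRc).2 (hnull c hc)

end PseudoMetric

theorem Equiv.Perm.image_iInter_zpow_image {α : Type*} (e : Equiv.Perm α) (s : Set α) :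
    e '' ⋂ n : ℤ, ⇑(e ^ n) '' s = ⋂ n : ℤ, ⇑(e ^ n) '' s := by
  rw [image_iInter e.bijective]
  simp_rw [image_image, ← Equiv.Perm.mul_apply, ← zpow_one_add]
  exact (Equiv.addLeft (1 : ℤ)).surjective.iInter_comp fun n => ⇑(e ^ n) '' s

theorem MeasureTheory.MeasurePreserving.perm_zpow {α : Type*} [MeasurableSpace α] {μ : Measure α}
    {e : Equiv.Perm α} (he : MeasurePreserving e μ μ) (he' : MeasurePreserving e.symm μ μ)
    (n : ℤ) : MeasurePreserving ⇑(e ^ n) μ μ := by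
  obtain ⟨k, rfl | rfl⟩ := n.eq_nat_or_neg
  · simpa [← Equiv.Perm.iterate_eq_pow] using he.iterate k
  · simpa [zpow_neg, ← inv_pow, ← Equiv.Perm.iterate_eq_pow] using he'.iterate k

theorem MeasureTheory.measure_iInter_zpow_image_eq_one {α : Type*} [MeasurableSpace α]
    {μ : Measure α} [IsProbabilityMeasure μ] {e : Equiv.Perm α} (he : MeasurePreserving e μ μ)
    (he' : MeasurePreserving e.symm μ μ) {s : Set α} (hs : MeasurableSet s) (h : μ s = 1) :
    μ (⋂ n : ℤ, ⇑(e ^ n) '' s) = 1 := by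
  have image_eq (n : ℤ) : ⇑(e ^ n) '' s = ⇑(e ^ (-n)) ⁻¹' s := by
    rw [Equiv.image_eq_preimage_symm, zpow_neg]
    rfl
  have hmeas (n : ℤ) : MeasurableSet (⇑(e ^ (-n)) ⁻¹' s) := (he.perm_zpow he' (-n)).measurable hs
  simp_rw [image_eq]
  rw [← mem_ae_iff_prob_eq_one (.iInter hmeas), countable_iInter_mem]
  intro n
  rw [mem_ae_iff_prob_eq_one (hmeas n),
    (he.perm_zpow he' (-n)).measure_preimage hs.nullMeasurableSet, h]

def Homeomorph.toPermHom (X : Type*) [TopologicalSpace X] : (X ≃ₜ X) →* Equiv.Perm X where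
  toFun := Homeomorph.toEquiv
  map_one' := rfl
  map_mul' _ _ := rfl

theorem Homeomorph.toEquiv_zpow {X : Type*} [TopologicalSpace X] (T : X ≃ₜ X) (n : ℤ) :
    (T ^ n).toEquiv = T.toEquiv ^ n :=
  map_zpow (toPermHom X) T n

theorem Homeomorph.isGδ_iInter_zpow_image {X : Type*} [TopologicalSpace X] (T : X ≃ₜ X)
    {s : Set X} (hs : IsGδ s) : IsGδ (⋂ n : ℤ, ⇑(T.toEquiv ^ n) '' s) := by
  refine .iInter fun n => ?_
  rw [← toEquiv_zpow, coe_toEquiv, image_eq_preimage_symm]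
  exact hs.preimage (T ^ n).symm.continuous

theorem exists_fractured_full_measure_Gdelta_general
    {X : Type*} [MetricSpace X] [SecondCountableTopology X]
    [MeasurableSpace X] [BorelSpace X]
    (μ : Measure X) [IsProbabilityMeasure μ] :
    (∃ Xs : Set X, IsGδ Xs ∧ μ Xs = 1 ∧ Fractured Xs) ∧
    (∀ T : X ≃ₜ X, MeasurePreserving T μ μ →
      ∀ Xs : Set X, IsGδ Xs → μ Xs = 1 → Fractured Xs →
        IsGδ (⋂ n : ℤ, (T.toEquiv ^ n) '' Xs) ∧
        μ (⋂ n : ℤ, (T.toEquiv ^ n) '' Xs) = 1 ∧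
        (T : X → X) '' (⋂ n : ℤ, (T.toEquiv ^ n) '' Xs) = ⋂ n : ℤ, (T.toEquiv ^ n) '' Xs ∧
        Fractured (⋂ n : ℤ, (T.toEquiv ^ n) '' Xs)) := by
  refine ⟨?_, fun T hT Xs hG h1 hF => ⟨T.isGδ_iInter_zpow_image hG, ?_,
    Equiv.Perm.image_iInter_zpow_image T.toEquiv Xs,
    hF.mono (iInter_subset_of_subset 0 (by simp))⟩⟩
  · obtain ⟨Xs, hG, hnull, hF⟩ := exists_isGδ_measure_compl_eq_zero_fractured μ
    exact ⟨Xs, hG, (prob_compl_eq_zero_iff hG.measurableSet).1 hnull, hF⟩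
  · exact measure_iInter_zpow_image_eq_one hT (hT.symm T.toMeasurableEquiv) hG.measurableSet h1

/-- Every Polish space with a Borel probability measure contains a `Gδ` subset `X^♯` of full
measure which is fractured in its subspace topology; moreover for any measure-preserving
homeomorphism `T` the set `X' = ⋂_{n ∈ ℤ} Tⁿ X^♯` is a `T`-invariant `Gδ` subset of full
measure which is fractured in its subspace topology. -/
theorem exists_fractured_full_measure_Gdelta
    {X : Type*} [MetricSpace X] [CompleteSpace X] [SecondCountableTopology X]
    [MeasurableSpace X] [BorelSpace X]
    (μ : Measure X) [IsProbabilityMeasure μ] :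
    (∃ Xs : Set X, IsGδ Xs ∧ μ Xs = 1 ∧ Fractured Xs) ∧
    (∀ T : X ≃ₜ X, MeasurePreserving T μ μ →
      ∀ Xs : Set X, IsGδ Xs → μ Xs = 1 → Fractured Xs →
        IsGδ (⋂ n : ℤ, (T.toEquiv ^ n) '' Xs) ∧
        μ (⋂ n : ℤ, (T.toEquiv ^ n) '' Xs) = 1 ∧
        (T : X → X) '' (⋂ n : ℤ, (T.toEquiv ^ n) '' Xs) = ⋂ n : ℤ, (T.toEquiv ^ n) '' Xs ∧
        Fractured (⋂ n : ℤ, (T.toEquiv ^ n) '' Xs)) :=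
  exists_fractured_full_measure_Gdelta_general μ
end

section
/- Let X be a fractured Polish space, μ a non-atomic Borel probability measure on X with full support, and T an ergodic measure-preserving homeomorphism of (X, μ). Suppose A and B are open subsets of X with μ(A) = μ(B). Then there exist pairwise disjoint clopen sets A_1, A_2, … ⊆ A which fill out A (i.e. μ(⋃_i A_i) = μ(A)) and integers n_1, n_2, … such that the sets B_i := T^{n_i} A_i are pairwise disjoint, contained in B, and fill out B. -/
/-!
Enumerate all triples `(i, j, m)` made of two indices of a countable clopen basis `e` and an
exponent, and exchange greedily: at step `k` keep the part of `e i` that `T ^ m` carries into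
`e j` (when `e i ⊆ A` and `e j ⊆ B`), minus what earlier steps already used on either side.
The pieces are clopen, disjoint and have disjoint images by construction, and the two residues
have equal measure. If they were not null, ergodicity would give a power `T ^ m` carrying a
non-null part of the residue of `A` into the residue of `B` through basis sets `e i`, `e j`,
and the step for `(i, j, m)` would have taken it.
-/

open MeasureTheory Set TopologicalSpace

theorem Fractured.exists_nat_clopen_basis {X : Type*} [TopologicalSpace X] (h : Fractured X) :
    ∃ e : ℕ → Set X, (∀ i, IsClopen (e i)) ∧ IsTopologicalBasis (range e) := by
  obtain ⟨𝔅, h𝔅c, h𝔅clopen, h𝔅⟩ := h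
  obtain ⟨e, he⟩ := (h𝔅c.insert ∅).exists_eq_range (insert_nonempty ∅ 𝔅)
  refine ⟨e, fun i => ?_, he ▸ h𝔅.insert_empty⟩
  rcases (he ▸ mem_range_self i : e i ∈ insert ∅ 𝔅) with h | h
  · exact h ▸ isClopen_empty
  · exact h𝔅clopen _ h

theorem TopologicalSpace.IsTopologicalBasis.exists_subset_measure_inter_ne_zero
    {X ι : Type*} [TopologicalSpace X] [MeasurableSpace X] {μ : Measure X} [Countable ι]
    {e : ι → Set X} (he : IsTopologicalBasis (range e)) {U R : Set X} (hU : IsOpen U)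
    (hRU : R ⊆ U) (hR : μ R ≠ 0) : ∃ i, e i ⊆ U ∧ μ (e i ∩ R) ≠ 0 := by
  by_contra! h
  refine hR (measure_mono_null (fun x hx => ?_)
    (measure_iUnion_null_iff.2 fun i => measure_iUnion_null_iff.2 (h i)))
  obtain ⟨_, ⟨i, rfl⟩, hxi, hiU⟩ := he.exists_subset_of_mem_open (hRU hx) hU
  exact mem_iUnion₂.2 ⟨i, hiU, hxi, hx⟩

theorem Homeomorph.continuous_toEquiv_zpow {X : Type*} [TopologicalSpace X] (T : X ≃ₜ X)
    (m : ℤ) : Continuous ⇑(T.toEquiv ^ m) := by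
  induction m using Int.induction_on with
  | zero => exact continuous_id
  | succ i ih => rw [zpow_add_one, Equiv.Perm.coe_mul]; exact ih.comp T.continuous
  | pred i ih => rw [zpow_sub_one, Equiv.Perm.coe_mul]; exact ih.comp T.symm.continuous

theorem MeasurableEquiv.measurePreserving_toEquiv_zpow {α : Type*} [MeasurableSpace α]
    {μ : Measure α} (e : α ≃ᵐ α) (he : MeasurePreserving e μ μ) (m : ℤ) :
    MeasurePreserving ⇑(e.toEquiv ^ m) μ μ := by
  induction m using Int.induction_on with
  | zero => exact MeasurePreserving.id μ
  | succ i ih => rw [zpow_add_one, Equiv.Perm.coe_mul]; exact ih.comp he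
  | pred i ih => rw [zpow_sub_one, Equiv.Perm.coe_mul]; exact ih.comp (he.symm e)

section Ergodic

variable {α : Type*} [MeasurableSpace α] {μ : Measure α}

theorem PreErgodic.of_measure_self_or_compl_eq_zero {f : α → α}
    (h : ∀ s, MeasurableSet s → f ⁻¹' s = s → μ s = 0 ∨ μ sᶜ = 0) : PreErgodic f μ :=
  ⟨fun s hs hfs => Filter.eventuallyConst_set'.2 ((h s hs hfs).imp ae_eq_empty.2 ae_eq_univ.2)⟩

/-- The `e`-orbit of a non-null set `S` is invariant, hence conull, so it meets every
non-null set `R` in a non-null set. -/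
theorem PreErgodic.exists_zpow_measure_inter_preimage_ne_zero {e : Equiv.Perm α}
    (he : PreErgodic e μ) (hm : ∀ m : ℤ, Measurable ⇑(e ^ m)) {R S : Set α}
    (hS : MeasurableSet S) (hR : μ R ≠ 0) (hS0 : μ S ≠ 0) :
    ∃ m : ℤ, μ (R ∩ ⇑(e ^ m) ⁻¹' S) ≠ 0 := by
  set W := ⋃ m : ℤ, ⇑(e ^ m) ⁻¹' S
  have hW : e ⁻¹' W = W := by
    have hshift (m : ℤ) : e ⁻¹' (⇑(e ^ m) ⁻¹' S) = ⇑(e ^ (m + 1)) ⁻¹' S := by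
      rw [zpow_add_one, Equiv.Perm.coe_mul]; rfl
    simp only [W, preimage_iUnion, hshift]
    exact (Equiv.addRight (1 : ℤ)).surjective.iUnion_comp fun m => ⇑(e ^ m) ⁻¹' S
  have hWc : μ Wᶜ = 0 := by
    refine (he.measure_self_or_compl_eq_zero (.iUnion fun m => hm m hS) hW).resolve_left
      fun h0 => hS0 (measure_mono_null ?_ h0)
    exact subset_iUnion_of_subset 0 (by simp)
  by_contra! h
  rw [← measure_inter_conull hWc, inter_iUnion] at hR
  exact hR (measure_iUnion_null_iff.2 h)

end Ergodic

theorem PreErgodic.exists_basis_zpow_mem_of_measure_ne_zero {X ι : Type*} [TopologicalSpace X]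
    [MeasurableSpace X] [OpensMeasurableSpace X] {μ : Measure X} [Countable ι]
    {e : ι → Set X} (he : IsTopologicalBasis (range e)) {f : Equiv.Perm X}
    (hf : PreErgodic f μ) (hm : ∀ m : ℤ, Measurable ⇑(f ^ m)) {U V R S : Set X}
    (hU : IsOpen U) (hV : IsOpen V) (hRU : R ⊆ U) (hSV : S ⊆ V) (hS : MeasurableSet S)
    (hR : μ R ≠ 0) (hS0 : μ S ≠ 0) :
    ∃ i j, ∃ m : ℤ, e i ⊆ U ∧ e j ⊆ V ∧ ∃ x ∈ e i ∩ R, (f ^ m) x ∈ e j ∩ S := by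
  obtain ⟨i, hiU, hi⟩ := he.exists_subset_measure_inter_ne_zero hU hRU hR
  obtain ⟨j, hjV, hj⟩ := he.exists_subset_measure_inter_ne_zero hV hSV hS0
  obtain ⟨m, hm⟩ := hf.exists_zpow_measure_inter_preimage_ne_zero hm
    ((he.isOpen (mem_range_self j)).measurableSet.inter hS) hi hj
  exact ⟨i, j, m, hiU, hjV, nonempty_of_measure_ne_zero hm⟩

theorem measure_iUnion_image_eq_of_pairwise_disjoint {α ι : Type*} [MeasurableSpace α]
    {μ : Measure α} [Countable ι] {σ : ι → Equiv.Perm α}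
    (hσ : ∀ i, MeasurePreserving ⇑(σ i)⁻¹ μ μ) {s : ι → Set α} (hs : ∀ i, MeasurableSet (s i))
    (hd : Pairwise (Function.onFun Disjoint s))
    (hd' : Pairwise (Function.onFun Disjoint fun i => σ i '' s i)) :
    μ (⋃ i, σ i '' s i) = μ (⋃ i, s i) := by
  have himage (i : ι) : σ i '' s i = ⇑(σ i)⁻¹ ⁻¹' s i := (σ i).image_eq_preimage_symm (s i)
  rw [measure_iUnion hd' fun i => himage i ▸ (hσ i).measurable (hs i), measure_iUnion hd hs]
  exact tsum_congr fun i => himage i ▸ (hσ i).measure_preimage (hs i).nullMeasurableSet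

theorem measure_sdiff_eq_of_measure_eq {α : Type*} [MeasurableSpace α] {μ : Measure α}
    [IsFiniteMeasure μ] {s t s' t' : Set α} (hst : s ⊆ t) (hst' : s' ⊆ t')
    (hs : NullMeasurableSet s μ) (hs' : NullMeasurableSet s' μ) (h : μ s = μ s')
    (h' : μ t = μ t') : μ (t \ s) = μ (t' \ s') := by
  rw [measure_sdiff hst hs (measure_ne_top μ s), measure_sdiff hst' hs' (measure_ne_top μ s'),
    h, h']

section Exchange

variable {X : Type*} (C : ℕ → Set X) (g : ℕ → X → X)

def exchangePiece (k : ℕ) : Set X :=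
  (C k \ ⋃ j < k, exchangePiece j) \ g k ⁻¹' ⋃ j < k, g j '' exchangePiece j

theorem exchangePiece_subset (k : ℕ) : exchangePiece C g k ⊆ C k := by
  rw [exchangePiece]
  exact sdiff_subset.trans sdiff_subset

theorem pairwise_disjoint_exchangePiece :
    Pairwise (Function.onFun Disjoint (exchangePiece C g)) := by
  refine (pairwise_disjoint_on _).2 fun j k hjk => disjoint_left.2 fun x hj hk => ?_
  rw [exchangePiece] at hk
  exact hk.1.2 (mem_biUnion hjk hj)

theorem pairwise_disjoint_image_exchangePiece :
    Pairwise (Function.onFun Disjoint fun k => g k '' exchangePiece C g k) := by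
  refine (pairwise_disjoint_on _).2 fun j k hjk => disjoint_left.2 ?_
  rintro _ hj ⟨x, hk, rfl⟩
  rw [exchangePiece] at hk
  exact hk.2 (mem_biUnion hjk hj)

theorem mem_iUnion_exchangePiece_or_mem_iUnion_image {x : X} {k : ℕ} (hx : x ∈ C k) :
    x ∈ ⋃ i, exchangePiece C g i ∨ g k x ∈ ⋃ i, g i '' exchangePiece C g i := by
  by_contra! h
  have hxk : x ∈ exchangePiece C g k := by
    rw [exchangePiece]
    exact ⟨⟨hx, fun hx' => h.1 (iUnion₂_subset_iUnion _ _ hx')⟩,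
      fun hx' => h.2 (iUnion₂_subset_iUnion _ _ hx')⟩
  exact h.1 (mem_iUnion_of_mem k hxk)

variable {C} in
theorem isClopen_exchangePiece [TopologicalSpace X] (hC : ∀ k, IsClopen (C k))
    {σ : ℕ → Equiv.Perm X} (hσ : ∀ k, Continuous (σ k)) (hσ' : ∀ k, Continuous ⇑(σ k)⁻¹)
    (k : ℕ) : IsClopen (exchangePiece C (fun k => σ k) k) := by
  induction k using Nat.strong_induction_on with
  | _ k ih =>
    have himage (j : ℕ) (hj : j < k) : IsClopen (σ j '' exchangePiece C (fun k => σ k) j) :=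
      (σ j).image_eq_preimage_symm _ ▸ (ih j hj).preimage (hσ' j)
    rw [exchangePiece]
    exact ((hC k).diff ((finite_lt_nat k).isClopen_biUnion ih)).diff
      (((finite_lt_nat k).isClopen_biUnion himage).preimage (hσ k))

end Exchange

section Filling

variable {X ι : Type*} [TopologicalSpace X] [MeasurableSpace X] [OpensMeasurableSpace X]
  {μ : Measure X} [Countable ι] {e : ι → Set X} {f : Equiv.Perm X} {U V : Set X}
  {C : ℕ → Set X} {σ : ℕ → Equiv.Perm X}

theorem PreErgodic.measure_sdiff_iUnion_image_exchangePiece_eq_zero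
    (he : IsTopologicalBasis (range e)) (hf : PreErgodic f μ)
    (hm : ∀ m : ℤ, Measurable ⇑(f ^ m)) (hU : IsOpen U) (hV : IsOpen V)
    (hC : ∀ i j (m : ℤ), e i ⊆ U → e j ⊆ V →
      ∃ k, σ k = f ^ m ∧ e i ∩ ⇑(f ^ m) ⁻¹' e j ⊆ C k)
    (hS : MeasurableSet (V \ ⋃ k, σ k '' exchangePiece C (fun k => σ k) k))
    (hR : μ (U \ ⋃ k, exchangePiece C (fun k => σ k) k) ≠ 0) :
    μ (V \ ⋃ k, σ k '' exchangePiece C (fun k => σ k) k) = 0 := by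
  by_contra hS0
  obtain ⟨i, j, m, hi, hj, x, ⟨hxi, hxU⟩, hmx, hmxV⟩ :=
    hf.exists_basis_zpow_mem_of_measure_ne_zero he hm hU hV sdiff_subset sdiff_subset hS hR hS0
  obtain ⟨k, hσk, hk⟩ := hC i j m hi hj
  rcases mem_iUnion_exchangePiece_or_mem_iUnion_image C _ (hk ⟨hxi, hmx⟩) with h | h
  exacts [hxU.2 h, hmxV.2 (hσk ▸ h)]

theorem PreErgodic.measure_iUnion_exchangePiece_eq [IsFiniteMeasure μ]
    (he : IsTopologicalBasis (range e)) (hf : PreErgodic f μ)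
    (hm : ∀ m : ℤ, Measurable ⇑(f ^ m)) (hσ : ∀ k, MeasurePreserving ⇑(σ k)⁻¹ μ μ)
    (hU : IsOpen U) (hV : IsOpen V) (hUV : μ U = μ V)
    (hCU : ∀ k, C k ⊆ U) (hCV : ∀ k, σ k '' C k ⊆ V)
    (hC : ∀ i j (m : ℤ), e i ⊆ U → e j ⊆ V →
      ∃ k, σ k = f ^ m ∧ e i ∩ ⇑(f ^ m) ⁻¹' e j ⊆ C k)
    (hP : ∀ k, MeasurableSet (exchangePiece C (fun k => σ k) k)) :
    μ (⋃ k, exchangePiece C (fun k => σ k) k) = μ U ∧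
      μ (⋃ k, σ k '' exchangePiece C (fun k => σ k) k) = μ V := by
  set P := exchangePiece C fun k => σ k
  have hPU : ⋃ k, P k ⊆ U := iUnion_subset fun k => (exchangePiece_subset C _ k).trans (hCU k)
  have hPV : ⋃ k, σ k '' P k ⊆ V :=
    iUnion_subset fun k => (image_mono (exchangePiece_subset C _ k)).trans (hCV k)
  have hσP (k : ℕ) : MeasurableSet (σ k '' P k) :=
    (σ k).image_eq_preimage_symm _ ▸ (hσ k).measurable (hP k)
  have hres : μ (U \ ⋃ k, P k) = μ (V \ ⋃ k, σ k '' P k) :=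
    measure_sdiff_eq_of_measure_eq hPU hPV (.iUnion fun k => (hP k).nullMeasurableSet)
      (.iUnion fun k => (hσP k).nullMeasurableSet)
      (measure_iUnion_image_eq_of_pairwise_disjoint hσ hP (pairwise_disjoint_exchangePiece C _)
        (pairwise_disjoint_image_exchangePiece C _)).symm hUV
  have hU0 : μ (U \ ⋃ k, P k) = 0 := by
    by_contra h
    exact h (hres ▸ hf.measure_sdiff_iUnion_image_exchangePiece_eq_zero he hm hU hV hC
      (hV.measurableSet.diff (.iUnion hσP)) h)
  exact ⟨measure_eq_measure_of_null_sdiff hPU hU0,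
    measure_eq_measure_of_null_sdiff hPV (hres ▸ hU0)⟩

end Filling

section Candidate

variable {X : Type*} (e : ℕ → Set X) (f : Equiv.Perm X) (U V : Set X)

open Classical in
def exchangeCandidate (t : ℕ × ℕ × ℤ) : Set X :=
  if e t.1 ⊆ U ∧ e t.2.1 ⊆ V then e t.1 ∩ ⇑(f ^ t.2.2) ⁻¹' e t.2.1 else ∅

variable {e f U V}

theorem exchangeCandidate_subset (t : ℕ × ℕ × ℤ) : exchangeCandidate e f U V t ⊆ U := by
  unfold exchangeCandidate
  split_ifs with h
  · exact inter_subset_left.trans h.1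
  · exact empty_subset U

theorem image_exchangeCandidate_subset (t : ℕ × ℕ × ℤ) :
    (f ^ t.2.2) '' exchangeCandidate e f U V t ⊆ V := by
  unfold exchangeCandidate
  split_ifs with h
  · exact image_subset_iff.2 (inter_subset_right.trans (preimage_mono h.2))
  · simp

theorem exchangeCandidate_eq_inter {i j : ℕ} {m : ℤ} (hi : e i ⊆ U) (hj : e j ⊆ V) :
    exchangeCandidate e f U V (i, j, m) = e i ∩ ⇑(f ^ m) ⁻¹' e j :=
  if_pos ⟨hi, hj⟩

theorem isClopen_exchangeCandidate [TopologicalSpace X] (he : ∀ i, IsClopen (e i)) (hf : ∀ m : ℤ, Continuous ⇑(f ^ m))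
    (t : ℕ × ℕ × ℤ) : IsClopen (exchangeCandidate e f U V t) := by
  unfold exchangeCandidate
  split_ifs
  · exact (he _).inter ((he _).preimage (hf _))
  · exact isClopen_empty

end Candidate

theorem exchange_open_sets_of_equal_measure_general
    {X : Type*} [TopologicalSpace X] [MeasurableSpace X] [BorelSpace X]
    (hXf : Fractured X)
    (μ : Measure X) [IsProbabilityMeasure μ]
    (T : X ≃ₜ X) (hT : MeasurePreserving T μ μ)
    (hTerg : ∀ A : Set X, MeasurableSet A → T ⁻¹' A = A → μ A = 0 ∨ μ Aᶜ = 0)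
    (A B : Set X) (hA : IsOpen A) (hB : IsOpen B) (hAB : μ A = μ B) :
    ∃ (As : ℕ → Set X) (n : ℕ → ℤ),
      (∀ i, IsClopen (As i)) ∧
      (∀ i, As i ⊆ A) ∧
      Pairwise (Function.onFun Disjoint As) ∧
      μ (⋃ i, As i) = μ A ∧
      Pairwise (Function.onFun Disjoint (fun i => (T.toEquiv ^ n i) '' As i)) ∧
      (∀ i, (T.toEquiv ^ n i) '' As i ⊆ B) ∧
      μ (⋃ i, (T.toEquiv ^ n i) '' As i) = μ B := by
  obtain ⟨e, he_clopen, he⟩ := hXf.exists_nat_clopen_basis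
  obtain ⟨p, hp⟩ := exists_surjective_nat (ℕ × ℕ × ℤ)
  have hcont := T.continuous_toEquiv_zpow
  have hmp := T.toMeasurableEquiv.measurePreserving_toEquiv_zpow hT
  set n : ℕ → ℤ := fun k => (p k).2.2
  set C : ℕ → Set X := fun k => exchangeCandidate e T.toEquiv A B (p k)
  have hP (k : ℕ) : IsClopen (exchangePiece C (fun k => ⇑(T.toEquiv ^ n k)) k) :=
    isClopen_exchangePiece (fun k => isClopen_exchangeCandidate he_clopen hcont (p k))
      (fun k => hcont _) (fun k => zpow_neg T.toEquiv (n k) ▸ hcont _) k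
  have hcover (i j : ℕ) (m : ℤ) (hi : e i ⊆ A) (hj : e j ⊆ B) :
      ∃ k, T.toEquiv ^ n k = T.toEquiv ^ m ∧ e i ∩ ⇑(T.toEquiv ^ m) ⁻¹' e j ⊆ C k := by
    obtain ⟨k, hk⟩ := hp (i, j, m)
    refine ⟨k, by simp only [n, hk], ?_⟩
    simp only [C, hk, exchangeCandidate_eq_inter hi hj, subset_refl]
  obtain ⟨hfillA, hfillB⟩ :=
    (PreErgodic.of_measure_self_or_compl_eq_zero hTerg).measure_iUnion_exchangePiece_eq he
      (fun m => (hmp m).measurable) (fun k => zpow_neg T.toEquiv (n k) ▸ hmp _) hA hB hAB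
      (fun k => exchangeCandidate_subset (p k))
      (fun k => image_exchangeCandidate_subset (p k)) hcover
      (fun k => (hP k).isOpen.measurableSet)
  exact ⟨_, n, hP, fun k => (exchangePiece_subset C _ k).trans (exchangeCandidate_subset _),
    pairwise_disjoint_exchangePiece C _, hfillA, pairwise_disjoint_image_exchangePiece C _,
    fun k => (image_mono (exchangePiece_subset C _ k)).trans
      (image_exchangeCandidate_subset _), hfillB⟩

/-- **Lemma 1 of del Junco–Şahin.** If `A` and `B` are open sets of equal measure in a
fractured Polish space carrying a non-atomic fully supported probability measure invariant
and ergodic under a homeomorphism `T`, then there are disjoint clopen sets `Aᵢ ⊆ A` filling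
out `A` and integers `nᵢ` so that the sets `Bᵢ = T^{nᵢ} Aᵢ` are disjoint, contained in `B`,
and fill out `B`. -/
theorem exchange_open_sets_of_equal_measure
    {X : Type*} [TopologicalSpace X] [PolishSpace X] [MeasurableSpace X] [BorelSpace X]
    (hXf : Fractured X)
    (μ : Measure X) [IsProbabilityMeasure μ] [NullSingletonClass μ]
    (hfull : ∀ U : Set X, IsOpen U → U.Nonempty → μ U ≠ 0)
    (T : X ≃ₜ X) (hT : MeasurePreserving T μ μ)
    (hTerg : ∀ A : Set X, MeasurableSet A → T ⁻¹' A = A → μ A = 0 ∨ μ Aᶜ = 0)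
    (A B : Set X) (hA : IsOpen A) (hB : IsOpen B) (hAB : μ A = μ B) :
    ∃ (As : ℕ → Set X) (n : ℕ → ℤ),
      (∀ i, IsClopen (As i)) ∧
      (∀ i, As i ⊆ A) ∧
      Pairwise (Function.onFun Disjoint As) ∧
      μ (⋃ i, As i) = μ A ∧
      Pairwise (Function.onFun Disjoint (fun i => (T.toEquiv ^ n i) '' As i)) ∧
      (∀ i, (T.toEquiv ^ n i) '' As i ⊆ B) ∧
      μ (⋃ i, (T.toEquiv ^ n i) '' As i) = μ B :=
  exchange_open_sets_of_equal_measure_general hXf μ T hT hTerg A B hA hB hAB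
end

section
/- Let X be a fractured Polish space, μ a non-atomic Borel probability measure on X with full support, and T an ergodic measure-preserving homeomorphism of (X, μ). If B is an open subset of X and r_1, r_2, … are non-negative reals with μ(B) = r_1 + r_2 + ⋯, then there exist pairwise disjoint open subsets B_1, B_2, … of B with μ(B_i) = r_i for every i. -/
open MeasureTheory Set TopologicalSpace

/-! Since `μ` is outer regular and has no atoms, every point of an open set `G` has basic clopen
neighbourhoods inside `G` of arbitrarily small measure. Countably many of them cover `G`, and the
measures of their finite unions increase by steps `< ε` up to `μ G`; so every `t ≤ μ G` is
approximated from below, within `ε`, by the measure of a clopen subset of `G`.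

The sets `Bᵢ` are then grown greedily. Enumerate the pairs `(n, i)`; at step `(n, i)` add to
`Bᵢ` a clopen piece of the unused part of `B`, which is open because the used part is a finite
union of clopen sets, bringing `μ Bᵢ` within `1/n` of `rᵢ` from below. The invariant
`∑ᵢ (rᵢ - μ Bᵢ) ≤ μ (B \ used part)` guarantees that there is always room for such a piece. -/

open Function
open scoped ENNReal

theorem exists_le_lt_add_of_le_iSup {a : ℕ → ℝ≥0∞} {t ε : ℝ≥0∞} (h0 : a 0 ≤ t)
    (hstep : ∀ k, a (k + 1) ≤ a k + ε) (ht : t ≤ ⨆ k, a k) (ht_top : t ≠ ∞) (hε : ε ≠ 0) :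
    ∃ k, a k ≤ t ∧ t < a k + ε := by
  classical
  have hex : ∃ k, t < a k + ε := by
    have : t < (⨆ k, a k) + ε := (ENNReal.lt_add_right ht_top hε).trans_le (by gcongr)
    rwa [ENNReal.iSup_add, lt_iSup_iff] at this
  refine ⟨Nat.find hex, ?_, Nat.find_spec hex⟩
  cases h : Nat.find hex with
  | zero => exact h0
  | succ k =>
    have hk : ¬ t < a k + ε := Nat.find_min hex (by omega)
    exact (hstep k).trans (not_lt.1 hk)

theorem tsum_update_tsub {ι : Type*} [DecidableEq ι] {f : ι → ℝ≥0∞} (i : ι) {p : ℝ≥0∞}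
    (hp : p ≤ f i) (hp_top : p ≠ ∞) : ∑' j, update f i (f i - p) j = ∑' j, f j - p := by
  rw [ENNReal.tsum_eq_add_tsum_ite i, ENNReal.tsum_eq_add_tsum_ite (f := f) i, update_self,
    ENNReal.sub_add_eq_add_sub hp hp_top]
  congr 3
  ext j
  split_ifs with hj
  · rfl
  · exact update_of_ne hj _ _

section UpdateUnion

variable {α ι : Type*} [DecidableEq ι] (A : ι → Set α) (i : ι) (P : Set α)

theorem iUnion_update_union : ⋃ j, update A i (A i ∪ P) j = (⋃ j, A j) ∪ P := by
  refine subset_antisymm (iUnion_subset fun j => ?_) (union_subset (iUnion_mono fun j => ?_) ?_)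
  · rcases eq_or_ne j i with rfl | hj
    · simpa using union_subset_union_left P (subset_iUnion A j)
    · simpa [hj] using (subset_iUnion A j).trans subset_union_left
  · rcases eq_or_ne j i with rfl | hj <;> simp [*]
  · have := subset_iUnion (update A i (A i ∪ P)) i
    rw [update_self] at this
    exact subset_union_right.trans this

theorem Pairwise.disjoint_update_union (hA : Pairwise (Disjoint on A))
    (hP : Disjoint P (⋃ j, A j)) : Pairwise (Disjoint on update A i (A i ∪ P)) := by
  have key : ∀ j k, j ≠ k → k ≠ i → Disjoint (update A i (A i ∪ P) j) (A k) := by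
    intro j k hjk hki
    rcases eq_or_ne j i with rfl | hji
    · rw [update_self]
      exact disjoint_union_left.2 ⟨hA hjk, hP.mono_right (subset_iUnion A k)⟩
    · rw [update_of_ne hji]
      exact hA hjk
  intro j k hjk
  rcases eq_or_ne k i with rfl | hki
  · rw [onFun, update_of_ne hjk]
    exact (key k j hjk.symm hjk).symm
  · rw [onFun, update_of_ne hki]
    exact key j k hjk hki

end UpdateUnion

section ClopenSplit

variable {X : Type*} [TopologicalSpace X] [MeasurableSpace X]

def HasClopenApprox (μ : Measure X) : Prop :=
  ∀ G : Set X, IsOpen G → ∀ t ≤ μ G, ∀ ε ≠ 0,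
    ∃ W, IsClopen W ∧ W ⊆ G ∧ μ W ≤ t ∧ t ≤ μ W + ε

theorem Fractured.exists_clopen_cover_measure_lt [T1Space X] (hX : Fractured X)
    (μ : Measure X) [μ.OuterRegular] [NullSingletonClass μ] {G : Set X} (hG : IsOpen G)
    {ε : ℝ≥0∞} (hε : ε ≠ 0) :
    ∃ C : ℕ → Set X, (∀ n, IsClopen (C n) ∧ C n ⊆ G ∧ μ (C n) < ε) ∧ ⋃ n, C n = G := by
  obtain ⟨ℬ, hℬc, hℬclopen, hℬ⟩ := hX
  set S := insert ∅ {W ∈ ℬ | W ⊆ G ∧ μ W < ε}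
  have hS : ∀ W ∈ S, IsClopen W ∧ W ⊆ G ∧ μ W < ε :=
    forall_mem_insert.2 ⟨⟨isClopen_empty, empty_subset G, by simpa [pos_iff_ne_zero] using hε⟩,
      fun W hW => ⟨hℬclopen W hW.1, hW.2⟩⟩
  have hSG : ⋃₀ S = G := by
    refine subset_antisymm (sUnion_subset fun W hW => (hS W hW).2.1) fun x hx => ?_
    obtain ⟨U, hxU, hU, hμU⟩ := Set.exists_isOpen_lt_of_lt (μ := μ) {x} ε
      (by rw [measure_singleton]; exact pos_iff_ne_zero.2 hε)
    obtain ⟨W, hW, hxW, hWU⟩ :=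
      hℬ.exists_subset_of_mem_open (show x ∈ G ∩ U from ⟨hx, hxU rfl⟩) (hG.inter hU)
    exact ⟨W, mem_insert_of_mem _ ⟨hW, hWU.trans inter_subset_left,
      (measure_mono (hWU.trans inter_subset_right)).trans_lt hμU⟩, hxW⟩
  have hSc : S.Countable := (hℬc.mono (sep_subset _ _)).insert ∅
  obtain ⟨C, hC⟩ := hSc.exists_eq_range (insert_nonempty _ _)
  exact ⟨C, fun n => hS _ (hC ▸ mem_range_self n), by rw [← sUnion_range, ← hC, hSG]⟩

theorem Fractured.hasClopenApprox [T1Space X] (hX : Fractured X) (μ : Measure X)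
    [IsFiniteMeasure μ] [μ.OuterRegular] [NullSingletonClass μ] : HasClopenApprox μ := by
  intro G hG t ht ε hε
  obtain ⟨C, hC, hCG⟩ := hX.exists_clopen_cover_measure_lt μ hG hε
  set F : ℕ → Set X := fun k => ⋃ n ∈ Finset.range k, C n
  have hF : Monotone F := fun a b hab => biUnion_subset_biUnion_left (by simpa using hab)
  have hFG : ⋃ k, F k = G := by
    rw [← hCG]
    exact subset_antisymm (iUnion_subset fun k => iUnion₂_subset fun n _ => subset_iUnion C n)
      (iUnion_subset fun n => (subset_biUnion_of_mem (Finset.self_mem_range_succ n)).trans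
        (subset_iUnion F (n + 1)))
  have hFstep : ∀ k, μ (F (k + 1)) ≤ μ (F k) + ε := fun k => by
    simp only [F, Finset.range_add_one, Finset.set_biUnion_insert]
    exact (measure_union_le _ _).trans (by rw [add_comm]; gcongr; exact (hC k).2.2.le)
  obtain ⟨k, hk⟩ := exists_le_lt_add_of_le_iSup (a := fun k => μ (F k)) (by simp [F]) hFstep
    (by rw [← hF.measure_iUnion, hFG]; exact ht) (ne_top_of_le_ne_top (measure_ne_top μ G) ht) hε
  exact ⟨F k, isClopen_biUnion_finset fun n _ => (hC n).1,
    iUnion₂_subset fun n _ => (hC n).2.1, hk.1, hk.2.le⟩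

variable {μ : Measure X} {B : Set X} {s : ℕ → ℝ≥0∞}

variable (μ B s) in
structure IsPartialSplit (A : ℕ → Set X) : Prop where
  isOpen : ∀ i, IsOpen (A i)
  subset : ∀ i, A i ⊆ B
  pairwise_disjoint : Pairwise (Disjoint on A)
  isClosed_iUnion : IsClosed (⋃ i, A i)
  measure_le : ∀ i, μ (A i) ≤ s i
  tsum_tsub_le : ∑' i, (s i - μ (A i)) ≤ μ (B \ ⋃ i, A i)

theorem isPartialSplit_empty (hs : ∑' i, s i ≤ μ B) : IsPartialSplit μ B s fun _ => ∅ where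
  isOpen _ := isOpen_empty
  subset _ := empty_subset B
  pairwise_disjoint _ _ _ := disjoint_empty _
  isClosed_iUnion := by simp
  measure_le _ := by simp
  tsum_tsub_le := by simpa using hs

variable [OpensMeasurableSpace X]

theorem IsPartialSplit.exists_extend {A : ℕ → Set X} (hA : IsPartialSplit μ B s A)
    (happrox : HasClopenApprox μ) (hB : IsOpen B) (hfin : μ B ≠ ∞) (i : ℕ) {ε : ℝ≥0∞}
    (hε : ε ≠ 0) : ∃ A', IsPartialSplit μ B s A' ∧ A ≤ A' ∧ s i ≤ μ (A' i) + ε := by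
  set U := ⋃ j, A j
  obtain ⟨P, hPclopen, hPsub, hPle, hPge⟩ := happrox (B \ U) (hB.sdiff hA.isClosed_iUnion)
    (s i - μ (A i)) ((ENNReal.le_tsum i).trans hA.tsum_tsub_le) ε hε
  have hPU : Disjoint P U := disjoint_of_subset_left hPsub disjoint_sdiff_left
  have hPmeas : MeasurableSet P := hPclopen.isOpen.measurableSet
  have hPfin : μ P ≠ ∞ := ne_top_of_le_ne_top hfin (measure_mono (hPsub.trans sdiff_subset))
  have hAiP : μ (A i ∪ P) = μ (A i) + μ P :=
    measure_union (hPU.symm.mono_left (subset_iUnion A i)) hPmeas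
  have hdeficit : (fun j => s j - μ (update A i (A i ∪ P) j)) =
      update (fun j => s j - μ (A j)) i (s i - μ (A i) - μ P) := by
    funext j
    rcases eq_or_ne j i with rfl | hj
    · simp [hAiP, tsub_tsub]
    · simp [hj]
  refine ⟨update A i (A i ∪ P), ⟨?_, ?_, hA.pairwise_disjoint.disjoint_update_union A i P hPU,
    ?_, ?_, ?_⟩, fun j => ?_, ?_⟩
  · exact (forall_update_iff _ fun _ S => IsOpen S).2
      ⟨(hA.isOpen i).union hPclopen.isOpen, fun j _ => hA.isOpen j⟩
  · exact (forall_update_iff _ fun _ S => S ⊆ B).2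
      ⟨union_subset (hA.subset i) (hPsub.trans sdiff_subset), fun j _ => hA.subset j⟩
  · rw [iUnion_update_union]
    exact hA.isClosed_iUnion.union hPclopen.isClosed
  · exact (forall_update_iff _ fun j S => μ S ≤ s j).2
      ⟨hAiP ▸ add_le_of_le_tsub_left_of_le (hA.measure_le i) hPle, fun j _ => hA.measure_le j⟩
  · rw [hdeficit, tsum_update_tsub i hPle hPfin, iUnion_update_union, ← Set.sdiff_sdiff,
      measure_sdiff hPsub hPmeas.nullMeasurableSet hPfin]
    exact tsub_le_tsub_right hA.tsum_tsub_le _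
  · rcases eq_or_ne j i with rfl | hj
    · simp
    · simp [hj]
  · rw [update_self, hAiP]
    exact (tsub_le_iff_right.1 hPge).trans_eq (by ring)

theorem HasClopenApprox.exists_pairwise_disjoint_isOpen_measure_eq (happrox : HasClopenApprox μ)
    (hB : IsOpen B) (hfin : μ B ≠ ∞) (hs : ∑' i, s i ≤ μ B) :
    ∃ Bs : ℕ → Set X, (∀ i, IsOpen (Bs i)) ∧ (∀ i, Bs i ⊆ B) ∧
      Pairwise (Disjoint on Bs) ∧ ∀ i, μ (Bs i) = s i := by
  choose! extend hsplit hmono hclose using fun A (hA : IsPartialSplit μ B s A) (n i : ℕ) =>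
    hA.exists_extend happrox hB hfin i (ε := (n : ℝ≥0∞)⁻¹) (by simp)
  -- stage `m` serves the index `(Nat.unpair m).2` to within `1 / (Nat.unpair m).1`
  let A : ℕ → ℕ → Set X := fun m =>
    Nat.rec (fun _ => ∅) (fun m Am => extend Am (Nat.unpair m).1 (Nat.unpair m).2) m
  have hA : ∀ m, IsPartialSplit μ B s (A m) := fun m =>
    Nat.rec (isPartialSplit_empty hs) (fun m h => hsplit _ h _ _) m
  have hAmono : Monotone A := monotone_nat_of_le_succ fun m => hmono _ (hA m) _ _
  refine ⟨fun i => ⋃ m, A m i, fun i => isOpen_iUnion fun m => (hA m).isOpen i,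
    fun i => iUnion_subset fun m => (hA m).subset i, fun i j hij => ?_, fun i => ?_⟩
  · refine disjoint_iUnion_left.2 fun m => disjoint_iUnion_right.2 fun m' => ?_
    exact ((hA (max m m')).pairwise_disjoint hij).mono (hAmono (le_max_left m m') i)
      (hAmono (le_max_right m m') j)
  · rw [Monotone.measure_iUnion fun m m' h => hAmono h i]
    refine le_antisymm (iSup_le fun m => (hA m).measure_le i)
      (ENNReal.le_of_forall_pos_le_add fun ε hε _ => ?_)
    obtain ⟨n, hn⟩ := ENNReal.exists_inv_nat_lt (a := ε) (by simpa using hε.ne')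
    set m := Nat.pair n i
    calc s i ≤ μ (A (m + 1) i) + (n : ℝ≥0∞)⁻¹ := by
          simpa [A, m, Nat.unpair_pair] using hclose _ (hA m) n i
      _ ≤ (⨆ m, μ (A m i)) + ε := add_le_add (le_iSup (fun m => μ (A m i)) (m + 1)) hn.le

end ClopenSplit

theorem open_set_split_prescribed_measures_general
    {X : Type*} [TopologicalSpace X] [PolishSpace X] [MeasurableSpace X] [BorelSpace X]
    (hXf : Fractured X)
    (μ : Measure X) [IsProbabilityMeasure μ] [NullSingletonClass μ]
    (B : Set X) (hB : IsOpen B)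
    (r : ℕ → ℝ)
    (hsum : μ B = ∑' i, ENNReal.ofReal (r i)) :
    ∃ Bs : ℕ → Set X,
      (∀ i, IsOpen (Bs i)) ∧
      (∀ i, Bs i ⊆ B) ∧
      Pairwise (Function.onFun Disjoint Bs) ∧
      (∀ i, μ (Bs i) = ENNReal.ofReal (r i)) :=
  (hXf.hasClopenApprox μ).exists_pairwise_disjoint_isOpen_measure_eq hB (measure_ne_top μ B)
    hsum.ge

/-- **Lemma 2(b) of del Junco–Şahin.** In a fractured Polish space with a non-atomic fully
supported probability measure invariant and ergodic under a homeomorphism `T`, if `B` is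
open and `μ(B) = r₁ + r₂ + ⋯` with the `rᵢ` non-negative reals, then `B` contains pairwise
disjoint open subsets `Bᵢ` with `μ(Bᵢ) = rᵢ`. -/
theorem open_set_split_prescribed_measures
    {X : Type*} [TopologicalSpace X] [PolishSpace X] [MeasurableSpace X] [BorelSpace X]
    (hXf : Fractured X)
    (μ : Measure X) [IsProbabilityMeasure μ] [NullSingletonClass μ]
    (hfull : ∀ U : Set X, IsOpen U → U.Nonempty → μ U ≠ 0)
    (T : X ≃ₜ X) (hT : MeasurePreserving T μ μ)
    (hTerg : ∀ A : Set X, MeasurableSet A → T ⁻¹' A = A → μ A = 0 ∨ μ Aᶜ = 0)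
    (B : Set X) (hB : IsOpen B)
    (r : ℕ → ℝ) (hr : ∀ i, 0 ≤ r i)
    (hsum : μ B = ∑' i, ENNReal.ofReal (r i)) :
    ∃ Bs : ℕ → Set X,
      (∀ i, IsOpen (Bs i)) ∧
      (∀ i, Bs i ⊆ B) ∧
      Pairwise (Function.onFun Disjoint Bs) ∧
      (∀ i, μ (Bs i) = ENNReal.ofReal (r i)) :=
  open_set_split_prescribed_measures_general hXf μ B hB r hsum
end

section
/- Let X be a fractured Polish space, μ a non-atomic Borel probability measure on X with full support, and T an ergodic measure-preserving homeomorphism of (X, μ). If 𝒯_0, 𝒯_1, …, 𝒯_{m-1} are pairwise disjoint arrays in X of equal widths, then there exists a stacking of 𝒯_0, 𝒯_1, …, 𝒯_{m-1}. -/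
/-!
Enumerate all *moves*: a choice of a column in each array `𝒯ₖ` together with integer shifts
`lₖ` (with `l₀ = 0`). Processing the moves greedily, move `j` carves the clopen set `Eⱼ` of
points `x` with `T^{lₖ} x` in the chosen base of `𝒯ₖ` and outside everything carved from `𝒯ₖ`
before. Each `Eⱼ` is the base of a column `[C₀, …, C_{m-1}]` of the stacking, `Cₖ` being the
slice of the chosen column of `𝒯ₖ` over `T^{lₖ} Eⱼ`. The carved parts of the bases all have
measure `∑ μ(Eⱼ)`, so by the equal widths the leftovers all have the same measure. If it were
positive, ergodicity would give shifts under which leftovers inside single columns of all the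
arrays meet in positive measure, and the move with these columns and shifts would have carved
that intersection.
-/

open MeasureTheory Set TopologicalSpace

variable {X : Type*} [TopologicalSpace X]

/-- A *column* of height `h` for a homeomorphism `T`: a clopen base `B₀` together with
integers `n₀ = 0, n₁, …, n_{h-1}` such that the levels `T^{nᵢ} B₀` are pairwise disjoint. -/
structure Column (T : X ≃ₜ X) (h : ℕ) where
  base : Set X
  clopen : IsClopen base
  n : Fin h → ℤ
  n_zero : ∀ i : Fin h, (i : ℕ) = 0 → n i = 0
  disj : Pairwise (Function.onFun Disjoint (fun i : Fin h => (T.toEquiv ^ n i) '' base))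

namespace Column

variable {T : X ≃ₜ X} {h : ℕ}

/-- The `i`-th level `T^{nᵢ} B₀` of a column. -/
def level (C : Column T h) (i : Fin h) : Set X := (T.toEquiv ^ C.n i) '' C.base

/-- The union of the levels of a column. -/
def carrier (C : Column T h) : Set X := ⋃ i, C.level i

/-- A *slice* of a column: same integers, base a clopen subset of the original base. -/
def IsSliceOf (C' C : Column T h) : Prop := C'.n = C.n ∧ C'.base ⊆ C.base

end Column

/-- An *array* for `T` of height `h`: a countable collection of pairwise disjoint columns of
height `h` (finite collections are obtained by letting all but finitely many columns have
empty base). -/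
structure TArray (T : X ≃ₜ X) (h : ℕ) where
  col : ℕ → Column T h
  disj : Pairwise (Function.onFun Disjoint (fun i => (col i).carrier))

namespace TArray

variable {T : X ≃ₜ X} {h : ℕ}

/-- The union of all levels of all columns of an array. -/
def carrier (A : TArray T h) : Set X := ⋃ i, (A.col i).carrier

/-- The base of an array: the union of the bases of its columns. -/
def base (A : TArray T h) : Set X := ⋃ i, (A.col i).base

/-- A *sub-array*: each of its columns is a slice of a column of the given array. -/
def IsSubArrayOf (A' A : TArray T h) : Prop := ∀ i, ∃ j, (A'.col i).IsSliceOf (A.col j)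

/-- A *refinement*: a sub-array whose levels fill out the levels of the given array. -/
def IsRefinementOf [MeasurableSpace X] (μ : Measure X) (A' A : TArray T h) : Prop :=
  A'.IsSubArrayOf A ∧ μ A'.carrier = μ A.carrier

end TArray

lemma concat_index_lt {m h : ℕ} (k : Fin m) (i : Fin h) :
    (k : ℕ) * h + (i : ℕ) < m * h :=
  calc (k : ℕ) * h + (i : ℕ) < (k : ℕ) * h + h := Nat.add_lt_add_left i.isLt _
    _ = ((k : ℕ) + 1) * h := by ring
    _ ≤ m * h := Nat.mul_le_mul_right h k.isLt

/-- `D` is the *concatenation* `[C₀, …, C_{m-1}]` of the columns `C k`: the bases of the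
`C k` form a column (they are images `T^{m_k}` of the base of `D = C₀`, pairwise disjoint),
and the levels of `D` are the levels of `C₀, …, C_{m-1}` traversed in order. -/
def Column.IsConcatenationOf {T : X ≃ₜ X} {m h : ℕ}
    (D : Column T (m * h)) (C : Fin m → Column T h) : Prop :=
  ∃ mk : Fin m → ℤ,
    (∀ k : Fin m, (k : ℕ) = 0 → mk k = 0) ∧
    (∀ k, (T.toEquiv ^ mk k) '' D.base = (C k).base) ∧
    Pairwise (Function.onFun Disjoint (fun k => (C k).carrier)) ∧
    ∀ (k : Fin m) (i : Fin h),
      D.n ⟨(k : ℕ) * h + (i : ℕ), concat_index_lt k i⟩ = mk k + (C k).n i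

/-- The data exhibiting the array `Ahat` (of height `m * h`) as an *extension* of the array
`A` (of height `h`): a refinement `ref` of `A` (with each column of `ref` a slice of the
column `wit c` of `A`) such that every column of `Ahat` is a concatenation of columns of
`ref`, and `Ahat` fills out `A`. -/
structure ExtensionData [MeasurableSpace X] (μ : Measure X) {T : X ≃ₜ X} {m h : ℕ}
    (Ahat : TArray T (m * h)) (A : TArray T h) where
  ref : TArray T h
  wit : ℕ → ℕ
  slice : ∀ c, (ref.col c).IsSliceOf (A.col (wit c))
  ref_fill : μ ref.carrier = μ A.carrier
  f : ℕ → Fin m → ℕ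
  concat : ∀ i, (Ahat.col i).IsConcatenationOf (fun k => ref.col (f i k))
  fill : μ Ahat.carrier = μ A.carrier

/-- `Ahat` is an *extension* of `A`. -/
def TArray.IsExtensionOf [MeasurableSpace X] (μ : Measure X) {T : X ≃ₜ X} {m h : ℕ}
    (Ahat : TArray T (m * h)) (A : TArray T h) : Prop :=
  Nonempty (ExtensionData μ Ahat A)

/-- The data exhibiting the array `A` (of height `m * h`) as a *stacking* of the pairwise
disjoint equal-width arrays `Ts 0, …, Ts (m-1)` (of height `h`): refinements `ref k` of
`Ts k` such that every column of `A` is a concatenation `[C₀, …, C_{m-1}]` with `C k` a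
column of `ref k`, and `A` fills out `⋃ k, Ts k`. -/
structure StackingData [MeasurableSpace X] (μ : Measure X) {T : X ≃ₜ X} {m h : ℕ}
    (A : TArray T (m * h)) (Ts : Fin m → TArray T h) where
  ref : Fin m → TArray T h
  ref_is : ∀ k, (ref k).IsRefinementOf μ (Ts k)
  f : ℕ → Fin m → ℕ
  concat : ∀ i, (A.col i).IsConcatenationOf (fun k => (ref k).col (f i k))
  fill : μ A.carrier = μ (⋃ k, (Ts k).carrier)

open Function

namespace Homeomorph

variable (T : X ≃ₜ X)

@[simp]
lemma coe_toEquiv_zpow (n : ℤ) : ⇑(T.toEquiv ^ n) = ⇑(T ^ n) :=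
  congrArg DFunLike.coe
    (map_zpow (MonoidHom.mk' (fun f : X ≃ₜ X => f.toEquiv) fun _ _ => rfl) T n).symm

lemma preimage_iUnion_preimage_zpow (S : Set X) :
    T ⁻¹' ⋃ n : ℤ, (T ^ n) ⁻¹' S = ⋃ n : ℤ, (T ^ n) ⁻¹' S := by
  conv_rhs => rw [← (Equiv.addRight (1 : ℤ)).surjective.iUnion_comp]
  simp only [preimage_iUnion, Equiv.coe_addRight, zpow_add_one]
  rfl

lemma isClopen_image {s : Set X} (hs : IsClopen s) : IsClopen (T '' s) := by
  rw [← preimage_symm]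
  exact hs.preimage T.symm.continuous

variable [MeasurableSpace X] [BorelSpace X] {μ : Measure X}

lemma measurePreserving_zpow (hT : MeasurePreserving T μ μ) (n : ℤ) :
    MeasurePreserving ⇑(T ^ n) μ μ := by
  induction n using Int.induction_on with
  | zero => exact MeasurePreserving.id μ
  | succ n ih => rw [zpow_add_one]; exact ih.comp hT
  | pred n ih => rw [zpow_sub_one]; exact ih.comp (hT.symm T.toMeasurableEquiv)

lemma measure_zpow_image (hT : MeasurePreserving T μ μ) (n : ℤ) (s : Set X) :
    μ ((T ^ n) '' s) = μ s := by
  rw [← preimage_symm, ← inv_def, ← zpow_neg]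
  exact (T.measurePreserving_zpow hT (-n)).measure_preimage_equiv
    (f := (T ^ (-n)).toMeasurableEquiv) s

end Homeomorph

lemma PreErgodic.of_measure_eq_zero_or_compl {α : Type*} [MeasurableSpace α] {μ : Measure α}
    {f : α → α}
    (h : ∀ s : Set α, MeasurableSet s → f ⁻¹' s = s → μ s = 0 ∨ μ sᶜ = 0) :
    PreErgodic f μ :=
  ⟨fun s hs hfs => Filter.eventuallyConst_set.2 <|
    (h s hs hfs).symm.imp ae_iff.2 measure_eq_zero_iff_ae_notMem.1⟩

section Recurrence

variable [MeasurableSpace X] [BorelSpace X] {μ : Measure X} {T : X ≃ₜ X}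

lemma exists_measure_inter_preimage_zpow_ne_zero (hT : PreErgodic T μ) {S V : Set X}
    (hS : MeasurableSet S) (hS0 : μ S ≠ 0) (hV0 : μ V ≠ 0) :
    ∃ n : ℤ, μ (V ∩ (T ^ n) ⁻¹' S) ≠ 0 := by
  set G := ⋃ n : ℤ, (T ^ n) ⁻¹' S
  have hG : μ Gᶜ = 0 := by
    refine (hT.measure_self_or_compl_eq_zero
      (.iUnion fun n => hS.preimage (T ^ n).continuous.measurable)
      (T.preimage_iUnion_preimage_zpow S)).resolve_left fun hG0 => hS0 (measure_mono_null ?_ hG0)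
    exact subset_iUnion_of_subset 0 fun x hx => hx
  by_contra! hnull
  refine hV0 (measure_mono_null (fun x hx => ?_)
    (measure_union_null (measure_iUnion_null hnull) hG))
  by_cases hxG : x ∈ G
  · obtain ⟨n, hn⟩ := mem_iUnion.1 hxG
    exact Or.inl (mem_iUnion.2 ⟨n, hx, hn⟩)
  · exact Or.inr hxG

lemma exists_measure_inter_biInter_preimage_zpow_ne_zero {ι : Type*} [DecidableEq ι]
    (hT : PreErgodic T μ) {V : ι → Set X} (hV : ∀ k, MeasurableSet (V k))
    (hV0 : ∀ k, μ (V k) ≠ 0) {S : Set X} (hS0 : μ S ≠ 0) (s : Finset ι) :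
    ∃ l : ι → ℤ, μ (S ∩ ⋂ k ∈ s, (T ^ l k) ⁻¹' V k) ≠ 0 := by
  induction s using Finset.induction_on with
  | empty => exact ⟨0, by simpa using hS0⟩
  | insert a s ha ih =>
    obtain ⟨l, hl⟩ := ih
    obtain ⟨n, hn⟩ := exists_measure_inter_preimage_zpow_ne_zero hT (hV a) (hV0 a) hl
    refine ⟨update l a n, ?_⟩
    convert hn using 2
    rw [Finset.set_biInter_insert, update_self, inter_comm ((T ^ n) ⁻¹' V a), ← inter_assoc]
    congr 2
    refine iInter₂_congr fun k hk => ?_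
    rw [update_of_ne (ne_of_mem_of_not_mem hk ha)]

lemma exists_iInter_preimage_zpow_ne_zero {ι : Type*} [Fintype ι] (hT : PreErgodic T μ)
    {V : ι → Set X} (hV : ∀ k, MeasurableSet (V k)) (hV0 : ∀ k, μ (V k) ≠ 0) (k₀ : ι) :
    ∃ l : ι → ℤ, l k₀ = 0 ∧ μ (⋂ k, (T ^ l k) ⁻¹' V k) ≠ 0 := by
  classical
  obtain ⟨l, hl⟩ :=
    exists_measure_inter_biInter_preimage_zpow_ne_zero hT hV hV0 (hV0 k₀) Finset.univ
  refine ⟨update l k₀ 0, update_self .., fun h0 => hl (measure_mono_null ?_ h0)⟩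
  rintro x ⟨hx₀, hx⟩
  refine mem_iInter.2 fun k => ?_
  rcases eq_or_ne k k₀ with rfl | hk
  · simpa using hx₀
  · simpa [update_of_ne hk] using mem_iInter₂.1 hx k (Finset.mem_univ k)

end Recurrence

section Greedy

variable {ι : Type*} (g : ℕ → ι → X ≃ₜ X) (W : ℕ → ι → Set X)

def greedyUsed : ℕ → ι → Set X
  | 0, _ => ∅
  | j + 1, k => greedyUsed j k ∪ g j k '' ⋂ i, g j i ⁻¹' (W j i \ greedyUsed j i)

def greedyPiece (j : ℕ) : Set X := ⋂ i, g j i ⁻¹' (W j i \ greedyUsed g W j i)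

lemma greedyUsed_mono (k : ι) : Monotone (greedyUsed g W · k) :=
  monotone_nat_of_le_succ fun _ => subset_union_left

lemma image_greedyPiece_subset (j : ℕ) (k : ι) :
    g j k '' greedyPiece g W j ⊆ W j k \ greedyUsed g W j k :=
  (image_mono (iInter_subset _ k)).trans (image_preimage_subset _ _)

lemma pairwise_disjoint_image_greedyPiece (k : ι) :
    Pairwise (Disjoint on fun j => g j k '' greedyPiece g W j) := by
  have key : ∀ {j j'}, j < j' →
      Disjoint (g j k '' greedyPiece g W j) (g j' k '' greedyPiece g W j') := fun {j j'} hj =>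
    disjoint_left.2 fun x hx hx' => (image_greedyPiece_subset g W j' k hx').2 <|
      greedyUsed_mono g W k hj (subset_union_right hx)
  intro j j' hne
  rcases hne.lt_or_gt with hj | hj
  exacts [key hj, (key hj).symm]

lemma greedyUsed_subset_iUnion (j : ℕ) (k : ι) :
    greedyUsed g W j k ⊆ ⋃ j', g j' k '' greedyPiece g W j' := by
  induction j with
  | zero => exact empty_subset _
  | succ j ih => exact union_subset ih (subset_iUnion_of_subset j subset_rfl)

lemma iInter_preimage_diff_iUnion_image_greedyPiece_eq_empty [Nonempty ι] (j : ℕ) :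
    ⋂ k, g j k ⁻¹' (W j k \ ⋃ j', g j' k '' greedyPiece g W j') = ∅ := by
  refine eq_empty_of_forall_notMem fun x hx => ?_
  have hxj : x ∈ greedyPiece g W j := mem_iInter.2 fun k =>
    sdiff_subset_sdiff_right (greedyUsed_subset_iUnion g W j k) (mem_iInter.1 hx k)
  obtain ⟨k⟩ := ‹Nonempty ι›
  exact (mem_iInter.1 hx k).2 (mem_iUnion.2 ⟨j, mem_image_of_mem _ hxj⟩)

variable [Finite ι] {g W} (hW : ∀ j k, IsClopen (W j k))
include hW

lemma isClopen_greedyUsed (j : ℕ) (k : ι) : IsClopen (greedyUsed g W j k) := by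
  induction j generalizing k with
  | zero => exact isClopen_empty
  | succ j ih =>
    exact (ih k).union <| (g j k).isClopen_image <| isClopen_iInter_of_finite fun i =>
      ((hW j i).diff (ih i)).preimage (g j i).continuous

lemma isClopen_greedyPiece (j : ℕ) : IsClopen (greedyPiece g W j) :=
  isClopen_iInter_of_finite fun i =>
    ((hW j i).diff (isClopen_greedyUsed hW j i)).preimage (g j i).continuous

end Greedy

lemma finProdFinEquiv_symm_mk {m h : ℕ} (k : Fin m) (i : Fin h) :
    finProdFinEquiv.symm ⟨(k : ℕ) * h + i, concat_index_lt k i⟩ = (k, i) :=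
  finProdFinEquiv.symm_apply_eq.2 <| Fin.ext <| by
    simp [finProdFinEquiv, Nat.mul_comm, Nat.add_comm]

namespace Column

variable {T : X ≃ₜ X} {h m : ℕ}

lemma level_eq (C : Column T h) (i : Fin h) : C.level i = (T ^ C.n i) '' C.base := by
  simp [level]

lemma isClopen_level (C : Column T h) (i : Fin h) : IsClopen (C.level i) :=
  C.level_eq i ▸ (T ^ C.n i).isClopen_image C.clopen

lemma level_subset_carrier (C : Column T h) (i : Fin h) : C.level i ⊆ C.carrier :=
  subset_iUnion _ i

lemma base_subset_carrier (C : Column T h) (hh : 0 < h) : C.base ⊆ C.carrier := by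
  simpa [level, C.n_zero ⟨0, hh⟩ rfl] using C.level_subset_carrier ⟨0, hh⟩

lemma IsSliceOf.level_subset {C' C : Column T h} (hs : C'.IsSliceOf C) (i : Fin h) :
    C'.level i ⊆ C.level i := by
  rw [level, level, hs.1]
  exact image_mono hs.2

lemma IsSliceOf.carrier_subset {C' C : Column T h} (hs : C'.IsSliceOf C) :
    C'.carrier ⊆ C.carrier :=
  iUnion_mono hs.level_subset

lemma IsSliceOf.disjoint_carrier {C₁ C₂ C : Column T h} (h₁ : C₁.IsSliceOf C)
    (h₂ : C₂.IsSliceOf C) (hd : Disjoint C₁.base C₂.base) :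
    Disjoint C₁.carrier C₂.carrier := by
  refine disjoint_iUnion_left.2 fun i => disjoint_iUnion_right.2 fun i' => ?_
  rcases eq_or_ne i i' with rfl | hi
  · rw [level, level, h₁.1, h₂.1]
    exact hd.image (Equiv.injective _).injOn (subset_univ _) (subset_univ _)
  · exact (C.disj hi).mono (h₁.level_subset i) (h₂.level_subset i')

def restrict (C : Column T h) (E : Set X) (hE : IsClopen E) (hEC : E ⊆ C.base) : Column T h where
  base := E
  clopen := hE
  n := C.n
  n_zero := C.n_zero
  disj := C.disj.mono fun _ _ hd => hd.mono (image_mono hEC) (image_mono hEC)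

lemma restrict_isSliceOf (C : Column T h) {E : Set X} (hE : IsClopen E) (hEC : E ⊆ C.base) :
    (C.restrict E hE hEC).IsSliceOf C :=
  ⟨rfl, hEC⟩

lemma pairwise_disjoint_level_of_pairwise_disjoint_carrier {C : Fin m → Column T h}
    (hC : Pairwise (Disjoint on fun k => (C k).carrier)) :
    Pairwise (Disjoint on fun q : Fin m × Fin h => (C q.1).level q.2) := by
  rintro ⟨k, i⟩ ⟨k', i'⟩ hne
  rcases eq_or_ne k k' with rfl | hk
  · exact (C k).disj fun hi => hne (Prod.ext rfl hi)
  · exact (hC hk).mono ((C k).level_subset_carrier i) ((C k').level_subset_carrier i')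

lemma image_zpow_add_eq_level {C : Column T h} {E : Set X} {a : ℤ} (hE : (T ^ a) '' E = C.base)
    (i : Fin h) : (T.toEquiv ^ (a + C.n i)) '' E = C.level i := by
  rw [level_eq, ← hE, Homeomorph.coe_toEquiv_zpow, add_comm, zpow_add]
  exact image_comp (T ^ C.n i) (T ^ a) E

-- `finProdFinEquiv.symm p = (p / h, p % h)`: the levels of `C k` form the `k`-th block of `h`
-- consecutive levels of the concatenation.
def concat (C : Fin m → Column T h) (hC : Pairwise (Disjoint on fun k => (C k).carrier))
    (E : Set X) (hE : IsClopen E) (l : Fin m → ℤ)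
    (hl : ∀ k : Fin m, (k : ℕ) = 0 → l k = 0) (hbase : ∀ k, (T ^ l k) '' E = (C k).base) :
    Column T (m * h) where
  base := E
  clopen := hE
  n p := l (finProdFinEquiv.symm p).1 + (C (finProdFinEquiv.symm p).1).n (finProdFinEquiv.symm p).2
  n_zero p hp := by
    rw [hl _ (by simp [finProdFinEquiv, hp]), (C _).n_zero _ (by simp [finProdFinEquiv, hp]),
      add_zero]
  disj := by
    simp only [image_zpow_add_eq_level (hbase _)]
    exact (pairwise_disjoint_level_of_pairwise_disjoint_carrier hC).comp_of_injective
      finProdFinEquiv.symm.injective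

variable {C : Fin m → Column T h} {hC : Pairwise (Disjoint on fun k => (C k).carrier)}
  {E : Set X} {hE : IsClopen E} {l : Fin m → ℤ} {hl : ∀ k : Fin m, (k : ℕ) = 0 → l k = 0}
  {hbase : ∀ k, (T ^ l k) '' E = (C k).base}

lemma level_concat (p : Fin (m * h)) :
    (concat C hC E hE l hl hbase).level p =
      (C (finProdFinEquiv.symm p).1).level (finProdFinEquiv.symm p).2 :=
  image_zpow_add_eq_level (hbase _) _

lemma carrier_concat : (concat C hC E hE l hl hbase).carrier = ⋃ k, (C k).carrier := by
  rw [carrier, iUnion_congr level_concat,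
    finProdFinEquiv.symm.surjective.iUnion_comp (fun q => (C q.1).level q.2), iUnion_prod']
  rfl

lemma concat_isConcatenationOf : (concat C hC E hE l hl hbase).IsConcatenationOf C :=
  ⟨l, hl, fun k => by rw [Homeomorph.coe_toEquiv_zpow]; exact hbase k, hC, fun k i => by
    change l _ + (C _).n _ = _
    rw [finProdFinEquiv_symm_mk]⟩

end Column

namespace TArray

variable {T : X ≃ₜ X} {h m : ℕ}

lemma col_carrier_subset (A : TArray T h) (c : ℕ) : (A.col c).carrier ⊆ A.carrier :=
  subset_iUnion (fun c => (A.col c).carrier) c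

lemma IsSubArrayOf.carrier_subset {A' A : TArray T h} (hA : A'.IsSubArrayOf A) :
    A'.carrier ⊆ A.carrier :=
  iUnion_subset fun i => (hA i).choose_spec.carrier_subset.trans (A.col_carrier_subset _)

lemma measurableSet_carrier [MeasurableSpace X] [BorelSpace X] (A : TArray T h) :
    MeasurableSet A.carrier :=
  .iUnion fun c => .iUnion fun i => ((A.col c).isClopen_level i).isOpen.measurableSet

lemma measurableSet_base [MeasurableSpace X] [BorelSpace X] (A : TArray T h) :
    MeasurableSet A.base :=
  .iUnion fun c => (A.col c).clopen.isOpen.measurableSet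

lemma pairwise_disjoint_base (A : TArray T h) (hh : 0 < h) :
    Pairwise (Disjoint on fun c => (A.col c).base) := fun _ _ hc =>
  (A.disj hc).mono ((A.col _).base_subset_carrier hh) ((A.col _).base_subset_carrier hh)

section SubArray

def subArray (A : TArray T h) (c : ℕ → ℕ) (S : ℕ → Set X) (hS : ∀ j, IsClopen (S j))
    (hSc : ∀ j, S j ⊆ (A.col (c j)).base) (hSd : Pairwise (Disjoint on S)) : TArray T h where
  col j := (A.col (c j)).restrict (S j) (hS j) (hSc j)
  disj j j' hj := by
    by_cases hc : c j = c j'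
    · refine Column.IsSliceOf.disjoint_carrier (C := A.col (c j)) ⟨rfl, hSc j⟩ ⟨?_, ?_⟩
        (hSd hj)
      · change (A.col (c j')).n = _
        rw [hc]
      · change S j' ⊆ (A.col (c j)).base
        exact hc ▸ hSc j'
    · exact (A.disj hc).mono (Column.restrict_isSliceOf _ _ _).carrier_subset
        (Column.restrict_isSliceOf _ _ _).carrier_subset

variable (A : TArray T h) (c : ℕ → ℕ) (S : ℕ → Set X) (hS : ∀ j, IsClopen (S j))
  (hSc : ∀ j, S j ⊆ (A.col (c j)).base) (hSd : Pairwise (Disjoint on S))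

lemma subArray_isSubArrayOf : (A.subArray c S hS hSc hSd).IsSubArrayOf A :=
  fun j => ⟨c j, Column.restrict_isSliceOf _ (hS j) (hSc j)⟩

lemma carrier_subset_carrier_subArray_union :
    A.carrier ⊆ (A.subArray c S hS hSc hSd).carrier ∪
      ⋃ c', ⋃ i, (T ^ (A.col c').n i) '' (A.base \ ⋃ j, S j) := by
  simp only [carrier, Column.carrier, Column.level_eq, iUnion_subset_iff]
  rintro c' i _ ⟨b, hb, rfl⟩
  by_cases hbS : b ∈ ⋃ j, S j
  · obtain ⟨j, hj⟩ := mem_iUnion.1 hbS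
    have hcj : c j = c' := (A.pairwise_disjoint_base i.pos).eq
      (not_disjoint_iff.2 ⟨b, hSc j hj, hb⟩)
    refine Or.inl (mem_iUnion₂.2 ⟨j, i, ?_⟩)
    exact ⟨b, hj, by simp [subArray, Column.restrict, hcj]⟩
  · exact Or.inr (mem_iUnion₂.2 ⟨c', i, b, ⟨mem_iUnion.2 ⟨c', hb⟩, hbS⟩, rfl⟩)

lemma isRefinementOf_subArray [MeasurableSpace X] [BorelSpace X] {μ : Measure X}
    (hT : MeasurePreserving T μ μ) (hres : μ (A.base \ ⋃ j, S j) = 0) :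
    (A.subArray c S hS hSc hSd).IsRefinementOf μ A := by
  refine ⟨A.subArray_isSubArrayOf c S hS hSc hSd,
    le_antisymm (measure_mono (A.subArray_isSubArrayOf c S hS hSc hSd).carrier_subset) ?_⟩
  refine (measure_mono (A.carrier_subset_carrier_subArray_union c S hS hSc hSd)).trans
    ((measure_union_le _ _).trans (le_of_eq ?_))
  rw [measure_iUnion_null fun c' => measure_iUnion_null fun i => by
    rw [T.measure_zpow_image hT, hres], add_zero]

end SubArray

lemma pairwise_disjoint_col_carrier {A : Fin m → TArray T h}
    (hA : Pairwise (Disjoint on fun k => (A k).carrier)) (j : ℕ) :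
    Pairwise (Disjoint on fun k => ((A k).col j).carrier) := fun _ _ hk =>
  (hA hk).mono ((A _).col_carrier_subset j) ((A _).col_carrier_subset j)

def stack (A : Fin m → TArray T h) (hA : Pairwise (Disjoint on fun k => (A k).carrier))
    (E : ℕ → Set X) (hE : ∀ j, IsClopen (E j)) (l : ℕ → Fin m → ℤ)
    (hl : ∀ j, ∀ k : Fin m, (k : ℕ) = 0 → l j k = 0)
    (hbase : ∀ j k, (T ^ l j k) '' E j = ((A k).col j).base) : TArray T (m * h) where
  col j := Column.concat (fun k => (A k).col j) (pairwise_disjoint_col_carrier hA j) (E j) (hE j)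
    (l j) (hl j) (hbase j)
  disj j j' hj := by
    rw [onFun, Column.carrier_concat, Column.carrier_concat]
    refine disjoint_iUnion_left.2 fun k => disjoint_iUnion_right.2 fun k' => ?_
    rcases eq_or_ne k k' with rfl | hk
    · exact (A k).disj hj
    · exact (hA hk).mono ((A k).col_carrier_subset j) ((A k').col_carrier_subset j')

variable {A : Fin m → TArray T h} {hA : Pairwise (Disjoint on fun k => (A k).carrier)}
  {E : ℕ → Set X} {hE : ∀ j, IsClopen (E j)} {l : ℕ → Fin m → ℤ}
  {hl : ∀ j, ∀ k : Fin m, (k : ℕ) = 0 → l j k = 0}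
  {hbase : ∀ j k, (T ^ l j k) '' E j = ((A k).col j).base}

lemma carrier_stack : (stack A hA E hE l hl hbase).carrier = ⋃ k, (A k).carrier := by
  simp only [carrier, stack]
  rw [iUnion_congr fun j => Column.carrier_concat]
  exact iUnion_comm _

lemma nonempty_stackingData_stack [MeasurableSpace X] [BorelSpace X] {μ : Measure X}
    [IsFiniteMeasure μ] {Ts : Fin m → TArray T h}
    (href : ∀ k, (A k).IsRefinementOf μ (Ts k)) :
    Nonempty (StackingData μ (stack A hA E hE l hl hbase) Ts) := by
  refine ⟨⟨A, href, fun j _ => j, fun j => Column.concat_isConcatenationOf, ?_⟩⟩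
  rw [carrier_stack]
  refine measure_congr (Filter.EventuallyEq.countable_iUnion fun k => ?_)
  exact ae_eq_of_subset_of_measure_ge (href k).1.carrier_subset (href k).2.ge
    (A k).measurableSet_carrier.nullMeasurableSet (measure_ne_top μ _)

end TArray

/-- A move of the greedy construction: a column of each array, and shifts normalised to vanish
at the first array so that they can serve as the offsets of a concatenation. -/
abbrev StackMove (m : ℕ) :=
  (Fin m → ℕ) × {l : Fin m → ℤ // ∀ k : Fin m, (k : ℕ) = 0 → l k = 0}

instance (m : ℕ) : Nonempty (StackMove m) := ⟨(0, ⟨0, fun _ _ => rfl⟩)⟩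

section Exhaustion

variable {T : X ≃ₜ X} {h m : ℕ} (Ts : Fin m → TArray T h) (τ : ℕ → StackMove m)

def stackBase (j : ℕ) : Set X :=
  greedyPiece (fun j k => T ^ (τ j).2.1 k) (fun j k => ((Ts k).col ((τ j).1 k)).base) j

def stackSlice (j : ℕ) (k : Fin m) : Set X := (T ^ (τ j).2.1 k) '' stackBase Ts τ j

lemma isClopen_stackBase (j : ℕ) : IsClopen (stackBase Ts τ j) :=
  isClopen_greedyPiece (fun _ _ => Column.clopen _) j

lemma isClopen_stackSlice (j : ℕ) (k : Fin m) : IsClopen (stackSlice Ts τ j k) :=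
  (T ^ _).isClopen_image (isClopen_stackBase Ts τ j)

lemma stackSlice_subset (j : ℕ) (k : Fin m) :
    stackSlice Ts τ j k ⊆ ((Ts k).col ((τ j).1 k)).base :=
  (image_greedyPiece_subset _ _ j k).trans sdiff_subset

lemma pairwise_disjoint_stackSlice (k : Fin m) :
    Pairwise (Disjoint on fun j => stackSlice Ts τ j k) :=
  pairwise_disjoint_image_greedyPiece _ _ k

variable [MeasurableSpace X] [BorelSpace X] {μ : Measure X}

lemma measure_base_diff_iUnion_stackSlice [IsFiniteMeasure μ] (hT : MeasurePreserving T μ μ)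
    (k : Fin m) :
    μ ((Ts k).base \ ⋃ j, stackSlice Ts τ j k) = μ (Ts k).base - ∑' j, μ (stackBase Ts τ j) := by
  have hmeas j : MeasurableSet (stackSlice Ts τ j k) :=
    (isClopen_stackSlice Ts τ j k).isOpen.measurableSet
  have hsub : (⋃ j, stackSlice Ts τ j k) ⊆ (Ts k).base := iUnion_subset fun j =>
    (stackSlice_subset Ts τ j k).trans (subset_iUnion (fun c => ((Ts k).col c).base) _)
  rw [measure_sdiff hsub (MeasurableSet.iUnion hmeas).nullMeasurableSet (measure_ne_top μ _),
    measure_iUnion (pairwise_disjoint_stackSlice Ts τ k) hmeas]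
  simp only [stackSlice, T.measure_zpow_image hT]

theorem measure_base_diff_iUnion_stackSlice_eq_zero [IsFiniteMeasure μ]
    (hT : MeasurePreserving T μ μ) (hTerg : PreErgodic T μ)
    (hwidth : ∀ k k' : Fin m, μ (Ts k).base = μ (Ts k').base) (hτ : Surjective τ)
    (k₀ : Fin m) : μ ((Ts k₀).base \ ⋃ j, stackSlice Ts τ j k₀) = 0 := by
  set R : Fin m → Set X := fun k => (Ts k).base \ ⋃ j, stackSlice Ts τ j k
  by_contra hR₀
  have hR k : μ (R k) ≠ 0 := by
    rwa [measure_base_diff_iUnion_stackSlice Ts τ hT, hwidth k k₀,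
      ← measure_base_diff_iUnion_stackSlice Ts τ hT]
  have hcol k : ∃ c, μ (R k ∩ ((Ts k).col c).base) ≠ 0 := by
    have hRk : R k = ⋃ c, R k ∩ ((Ts k).col c).base := by
      rw [← inter_iUnion]
      exact (inter_eq_left.2 sdiff_subset).symm
    exact (exists_measure_pos_of_not_measure_iUnion_null (hRk ▸ hR k)).imp fun _ => ne_of_gt
  choose c hc using hcol
  have hRmeas k : MeasurableSet (R k ∩ ((Ts k).col (c k)).base) :=
    (((Ts k).measurableSet_base).diff
      (.iUnion fun j => (isClopen_stackSlice Ts τ j k).isOpen.measurableSet)).inter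
      ((Ts k).col (c k)).clopen.isOpen.measurableSet
  obtain ⟨l, hl₀, hl⟩ := exists_iInter_preimage_zpow_ne_zero hTerg hRmeas hc ⟨0, k₀.pos⟩
  obtain ⟨j, hj⟩ := hτ (c, ⟨l, fun k hk => (congrArg l (Fin.ext hk)).trans hl₀⟩)
  have : Nonempty (Fin m) := ⟨k₀⟩
  -- the move `(c, l)` would have carved this intersection
  refine hl (measure_mono_null ?_ measure_empty)
  rw [← iInter_preimage_diff_iUnion_image_greedyPiece_eq_empty (fun j k => T ^ (τ j).2.1 k)
    (fun j k => ((Ts k).col ((τ j).1 k)).base) j]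
  refine iInter_mono fun k => ?_
  rw [hj]
  exact preimage_mono fun x ⟨hxR, hxc⟩ => ⟨hxc, hxR.2⟩

end Exhaustion

theorem exists_stacking_general
    {X : Type*} [TopologicalSpace X] [MeasurableSpace X] [BorelSpace X]
    (μ : Measure X) [IsProbabilityMeasure μ]
    (T : X ≃ₜ X) (hT : MeasurePreserving T μ μ)
    (hTerg : ∀ A : Set X, MeasurableSet A → T ⁻¹' A = A → μ A = 0 ∨ μ Aᶜ = 0)
    {h m : ℕ} (Ts : Fin m → TArray T h)
    (hdisj : Pairwise (Function.onFun Disjoint (fun k => (Ts k).carrier)))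
    (hwidth : ∀ k k' : Fin m, μ (Ts k).base = μ (Ts k').base) :
    ∃ A : TArray T (m * h), Nonempty (StackingData μ A Ts) := by
  obtain ⟨τ, hτ⟩ := exists_surjective_nat (StackMove m)
  let ref : Fin m → TArray T h := fun k =>
    (Ts k).subArray (fun j => (τ j).1 k) (fun j => stackSlice Ts τ j k)
      (fun j => isClopen_stackSlice Ts τ j k) (fun j => stackSlice_subset Ts τ j k)
      (pairwise_disjoint_stackSlice Ts τ k)
  have href : ∀ k, (ref k).IsRefinementOf μ (Ts k) := fun k =>
    (Ts k).isRefinementOf_subArray _ _ _ _ _ hT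
      (measure_base_diff_iUnion_stackSlice_eq_zero Ts τ hT
        (.of_measure_eq_zero_or_compl hTerg) hwidth hτ k)
  have hrefdisj : Pairwise (Disjoint on fun k => (ref k).carrier) := fun k k' hk =>
    (hdisj hk).mono (href k).1.carrier_subset (href k').1.carrier_subset
  exact ⟨_, TArray.nonempty_stackingData_stack (hA := hrefdisj) (hE := isClopen_stackBase Ts τ)
    (hl := fun j => (τ j).2.2) (hbase := fun _ _ => rfl) href⟩

/-- **Lemma 4(a) of del Junco–Şahin.** Pairwise disjoint arrays `𝒯₀, …, 𝒯_{m-1}` of equal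
widths admit a stacking. -/
theorem exists_stacking
    {X : Type*} [TopologicalSpace X] [PolishSpace X] [MeasurableSpace X] [BorelSpace X]
    (hXf : Fractured X)
    (μ : Measure X) [IsProbabilityMeasure μ] [NullSingletonClass μ]
    (hfull : ∀ U : Set X, IsOpen U → U.Nonempty → μ U ≠ 0)
    (T : X ≃ₜ X) (hT : MeasurePreserving T μ μ)
    (hTerg : ∀ A : Set X, MeasurableSet A → T ⁻¹' A = A → μ A = 0 ∨ μ Aᶜ = 0)
    {h m : ℕ} (hm : 0 < m) (Ts : Fin m → TArray T h)
    (hdisj : Pairwise (Function.onFun Disjoint (fun k => (Ts k).carrier)))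
    (hwidth : ∀ k k' : Fin m, μ (Ts k).base = μ (Ts k').base) :
    ∃ A : TArray T (m * h), Nonempty (StackingData μ A Ts) :=
  exists_stacking_general μ T hT hTerg Ts hdisj hwidth
end

section
/- Let X be a fractured Polish space, μ a non-atomic Borel probability measure on X with full support, and T an ergodic measure-preserving homeomorphism of (X, μ). Then for every h ∈ ℕ and ε > 0 there is a clopen set B ⊆ X such that the sets B, TB, …, T^{h-1}B are pairwise disjoint and μ(B ∪ TB ∪ ⋯ ∪ T^{h-1}B) > 1 − ε. -/
open MeasureTheory Set TopologicalSpace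

/-!
Pick a nonempty clopen set `A` with `h • μ A ≤ ε / 2`. By ergodicity almost every point enters
`A`, and all but `ε / 2` of the space does so within `N` steps. The base `B` consists of the points
whose first entry time into `A` is one of `h, 2h, …` (and at most `N`). A point with first entry
time `n ≥ h` lies in `T^{-(n mod h)} B`, so the sets `T^{-r} (A ∪ B)`, `r < h`, give
`1 - ε / 2 < h • (μ A + μ B)`, whence `μ (B ∪ ⋯ ∪ T^{h-1} B) = h • μ B > 1 - ε`. The levels `T^i B`
are disjoint because `T^i` lowers first entry times by exactly `i`, and clopen because `A` is.
-/

open Function Filter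
open scoped ENNReal

theorem Fractured.pseudoMetrizableSpace {X : Type*} [TopologicalSpace X] (hX : Fractured X) :
    PseudoMetrizableSpace X := by
  obtain ⟨B, hBc, hBclopen, hB⟩ := hX
  have : SecondCountableTopology X := hB.secondCountableTopology hBc
  have : CompletelyRegularSpace X :=
    .of_isTopologicalBasis_clopens (hB.of_isOpen_of_subset (fun _ hs => hs.isOpen) hBclopen)
  infer_instance

theorem Fractured.exists_isClopen_nonempty_measure_lt {X : Type*} [TopologicalSpace X]
    [MeasurableSpace X] [BorelSpace X] [Nonempty X] (hX : Fractured X) (μ : Measure X)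
    [IsFiniteMeasure μ] [NullSingletonClass μ] {r : ℝ≥0∞} (hr : 0 < r) :
    ∃ A : Set X, IsClopen A ∧ A.Nonempty ∧ μ A < r := by
  have := hX.pseudoMetrizableSpace
  obtain ⟨x⟩ := ‹Nonempty X›
  have hx : μ {x} < r := by rwa [measure_singleton]
  obtain ⟨U, hxU, hU, hUr⟩ := exists_isOpen_lt_of_lt {x} r hx
  obtain ⟨B, -, hBclopen, hB⟩ := hX
  obtain ⟨A, hA, hxA, hAU⟩ := hB.exists_subset_of_mem_open (hxU rfl) hU
  exact ⟨A, hBclopen A hA, ⟨x, hxA⟩, (measure_mono hAU).trans_lt hUr⟩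

section Ergodic

variable {α : Type*} [MeasurableSpace α] {f : α → α} {μ : Measure α}

theorem preErgodic_of_forall_measure_eq_zero_or_compl
    (h : ∀ s, MeasurableSet s → f ⁻¹' s = s → μ s = 0 ∨ μ sᶜ = 0) : PreErgodic f μ where
  aeconst_set s hs hfs := by
    rw [eventuallyConst_set]
    rcases h s hs hfs with h0 | h0
    · exact .inr (measure_eq_zero_iff_ae_notMem.mp h0)
    · exact .inl (mem_ae_iff.mpr h0)

theorem Ergodic.measure_iUnion_preimage_iterate [IsFiniteMeasure μ] (hf : Ergodic f μ)
    {s : Set α} (hs : NullMeasurableSet s μ) (hs0 : μ s ≠ 0) :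
    μ (⋃ n, f^[n] ⁻¹' s) = μ univ := by
  set S := ⋃ n, f^[n] ⁻¹' s
  have hSm : NullMeasurableSet S μ :=
    .iUnion fun n => hs.preimage (hf.toMeasurePreserving.iterate n).quasiMeasurePreserving
  have hfS : f ⁻¹' S ⊆ S := by
    simp only [S, preimage_iUnion, ← preimage_comp, ← iterate_succ]
    exact iUnion_subset fun n => subset_iUnion (fun n => f^[n] ⁻¹' s) (n + 1)
  rcases hf.ae_empty_or_univ_of_preimage_ae_le hSm hfS.eventuallyLE with hS | hS
  · refine absurd (measure_mono_null (subset_iUnion (fun n => f^[n] ⁻¹' s) 0) ?_) hs0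
    rw [measure_congr hS, measure_empty]
  · exact measure_congr hS

theorem Ergodic.exists_lt_measure_accumulate_preimage_iterate [IsFiniteMeasure μ]
    (hf : Ergodic f μ) {s : Set α} (hs : NullMeasurableSet s μ) (hs0 : μ s ≠ 0) {r : ℝ≥0∞}
    (hr : r < μ univ) : ∃ N, r < μ (accumulate (fun n => f^[n] ⁻¹' s) N) :=
  (tendsto_measure_iUnion_accumulate.eventually_const_lt
    (by rwa [hf.measure_iUnion_preimage_iterate hs hs0])).exists

end Ergodic

section FirstEntry

variable {α : Type*} (f : α → α) (s : Set α)

def firstEntry (n : ℕ) : Set α := f^[n] ⁻¹' s ∩ ⋂ m < n, f^[m] ⁻¹' sᶜ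

def rohlinBase (h K : ℕ) : Set α := ⋃ k ∈ Finset.Icc 1 K, firstEntry f s (h * k)

variable {f s}

theorem mem_firstEntry {n : ℕ} {x : α} :
    x ∈ firstEntry f s n ↔ f^[n] x ∈ s ∧ ∀ m < n, f^[m] x ∉ s := by
  simp [firstEntry]

theorem eq_of_mem_firstEntry {m n : ℕ} {x : α} (hm : x ∈ firstEntry f s m)
    (hn : x ∈ firstEntry f s n) : m = n := by
  rw [mem_firstEntry] at hm hn
  by_contra hne
  rcases Nat.lt_or_gt_of_ne hne with hlt | hlt
  exacts [hn.2 m hlt hm.1, hm.2 n hlt hn.1]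

theorem mapsTo_iterate_firstEntry (n i : ℕ) :
    MapsTo f^[i] (firstEntry f s (n + i)) (firstEntry f s n) := by
  intro x hx
  rw [mem_firstEntry] at hx ⊢
  simp only [← iterate_add_apply]
  exact ⟨hx.1, fun m hm => hx.2 (m + i) (by omega)⟩

theorem exists_mem_firstEntry {n : ℕ} {x : α} (hx : f^[n] x ∈ s) :
    ∃ m ≤ n, x ∈ firstEntry f s m := by
  classical
  have hex : ∃ m, f^[m] x ∈ s := ⟨n, hx⟩
  exact ⟨Nat.find hex, Nat.find_min' hex hx,
    mem_firstEntry.mpr ⟨Nat.find_spec hex, fun m hm => Nat.find_min hex hm⟩⟩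

theorem IsClopen.firstEntry [TopologicalSpace α] (hs : IsClopen s) (hf : Continuous f) (n : ℕ) :
    IsClopen (firstEntry f s n) :=
  (hs.preimage (hf.iterate n)).inter <|
    (finite_lt_nat n).isClopen_biInter fun m _ => hs.compl.preimage (hf.iterate m)

theorem IsClopen.rohlinBase [TopologicalSpace α] (hs : IsClopen s) (hf : Continuous f)
    (h K : ℕ) : IsClopen (rohlinBase f s h K) :=
  isClopen_biUnion_finset fun _ _ => hs.firstEntry hf _

theorem pairwise_disjoint_image_iterate_rohlinBase (h K : ℕ) :
    Pairwise (Disjoint on fun i : Fin h => f^[i] '' rohlinBase f s h K) := by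
  intro i j hij
  refine disjoint_left.mpr ?_
  rintro _ ⟨y, hy, rfl⟩ ⟨z, hz, hzy⟩
  simp only [rohlinBase, mem_iUnion₂, Finset.mem_Icc] at hy hz
  obtain ⟨k, hk, hy⟩ := hy
  obtain ⟨k', hk', hz⟩ := hz
  have hhk : h ≤ h * k := Nat.le_mul_of_pos_right h hk.1
  have hhk' : h ≤ h * k' := Nat.le_mul_of_pos_right h hk'.1
  have hy' := mapsTo_iterate_firstEntry (h * k - i) i (by rwa [Nat.sub_add_cancel (by omega)])
  have hz' := mapsTo_iterate_firstEntry (h * k' - j) j (by rwa [Nat.sub_add_cancel (by omega)])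
  rw [hzy] at hz'
  have hsum : h * k + j = h * k' + i := by have := eq_of_mem_firstEntry hy' hz'; omega
  have hmod := congrArg (· % h) hsum
  simp only [Nat.mul_add_mod, Nat.mod_eq_of_lt j.isLt, Nat.mod_eq_of_lt i.isLt] at hmod
  exact hij (Fin.ext hmod.symm)

theorem accumulate_preimage_iterate_subset {h : ℕ} (hh : 0 < h) (N : ℕ) :
    accumulate (fun n => f^[n] ⁻¹' s) N ⊆
      ⋃ i : Fin h, f^[i] ⁻¹' (s ∪ rohlinBase f s h (N / h)) := by
  intro x hx
  obtain ⟨n, hnN, hxn⟩ := mem_accumulate.mp hx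
  obtain ⟨m, hmn, hxm⟩ := exists_mem_firstEntry hxn
  simp only [mem_iUnion, mem_preimage]
  by_cases hmh : m < h
  · exact ⟨⟨m, hmh⟩, .inl (mem_firstEntry.mp hxm).1⟩
  · refine ⟨⟨m % h, Nat.mod_lt m hh⟩, .inr (mem_iUnion₂.mpr ⟨m / h, ?_, ?_⟩)⟩
    · exact Finset.mem_Icc.mpr
        ⟨Nat.div_pos (not_lt.mp hmh) hh, Nat.div_le_div_right (hmn.trans hnN)⟩
    · rw [← Nat.div_add_mod m h] at hxm
      exact mapsTo_iterate_firstEntry _ _ hxm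

theorem MeasureTheory.MeasurePreserving.measure_accumulate_preimage_iterate_le
    [MeasurableSpace α] {μ : Measure α} (hf : MeasurePreserving f μ μ) {h : ℕ} (hh : 0 < h)
    (N : ℕ) :
    μ (accumulate (fun n => f^[n] ⁻¹' s) N) ≤ h * (μ s + μ (rohlinBase f s h (N / h))) :=
  calc μ (accumulate (fun n => f^[n] ⁻¹' s) N)
      ≤ ∑ i : Fin h, μ (f^[i] ⁻¹' (s ∪ rohlinBase f s h (N / h))) :=
        (measure_mono (accumulate_preimage_iterate_subset hh N)).trans
          (measure_iUnion_fintype_le _ _)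
    _ ≤ ∑ _i : Fin h, μ (s ∪ rohlinBase f s h (N / h)) :=
        Finset.sum_le_sum fun i _ => (hf.iterate i).measure_preimage_le _
    _ ≤ h * (μ s + μ (rohlinBase f s h (N / h))) := by
        rw [Finset.sum_const, Finset.card_univ, Fintype.card_fin, nsmul_eq_mul]
        gcongr
        exact measure_union_le _ _

end FirstEntry

theorem Equiv.Perm.image_pow_eq_preimage_iterate_symm {α : Type*} (σ : Equiv.Perm α)
    (s : Set α) (i : ℕ) : (σ ^ i) '' s = (⇑σ.symm)^[i] ⁻¹' s := by
  rw [Equiv.image_eq_preimage_symm, ← Equiv.Perm.inv_def, ← inv_pow, Equiv.Perm.coe_pow]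
  rfl

theorem MeasureTheory.MeasurePreserving.measure_iUnion_image_pow {α : Type*}
    [MeasurableSpace α] {μ : Measure α} {e : α ≃ᵐ α} (he : MeasurePreserving e μ μ) {s : Set α}
    (hs : MeasurableSet s) {h : ℕ}
    (hd : Pairwise (Disjoint on fun i : Fin h => (e.toEquiv ^ (i : ℕ)) '' s)) :
    μ (⋃ i : Fin h, (e.toEquiv ^ (i : ℕ)) '' s) = h * μ s := by
  simp only [Equiv.Perm.image_pow_eq_preimage_iterate_symm] at hd ⊢
  rw [measure_iUnion hd fun i => hs.preimage (e.symm.measurable.iterate i), tsum_fintype]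
  simp [((he.symm e).iterate _).measure_preimage hs.nullMeasurableSet]

theorem ENNReal.one_sub_lt_of_one_sub_half_lt {x y a δ : ℝ≥0∞} (hδ : δ ≤ 1)
    (hx : 1 - δ / 2 < x) (hxy : x ≤ a + y) (ha : a ≤ δ / 2) : 1 - δ < y := by
  have hδ_ne_top : δ ≠ ∞ := ne_top_of_le_ne_top ENNReal.one_ne_top hδ
  refine (ENNReal.sub_lt_iff_lt_right hδ_ne_top hδ).mpr ?_
  calc 1 < x + δ / 2 := ENNReal.lt_add_of_sub_lt_right (.inl ENNReal.one_ne_top) hx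
    _ ≤ δ / 2 + y + δ / 2 := by gcongr; exact hxy.trans (by gcongr)
    _ = y + δ := by rw [add_comm (δ / 2), add_assoc, ENNReal.add_halves]

theorem clopen_rohlin_lemma_general
    {X : Type*} [TopologicalSpace X] [MeasurableSpace X] [BorelSpace X]
    (hXf : Fractured X)
    (μ : Measure X) [IsProbabilityMeasure μ] [NullSingletonClass μ]
    (hfull : ∀ U : Set X, IsOpen U → U.Nonempty → μ U ≠ 0)
    (T : X ≃ₜ X) (hT : MeasurePreserving T μ μ)
    (hTerg : ∀ A : Set X, MeasurableSet A → T ⁻¹' A = A → μ A = 0 ∨ μ Aᶜ = 0)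
    (h : ℕ) (hpos : 0 < h) (ε : ℝ) (hε : 0 < ε) :
    ∃ B : Set X, IsClopen B ∧
      Pairwise (Function.onFun Disjoint (fun i : Fin h => (T.toEquiv ^ (i : ℕ)) '' B)) ∧
      μ (⋃ i : Fin h, (T.toEquiv ^ (i : ℕ)) '' B) > 1 - ENNReal.ofReal ε := by
  set δ : ℝ≥0∞ := min (ENNReal.ofReal ε) 1
  have hδ : δ ≠ 0 := (lt_min (ENNReal.ofReal_pos.mpr hε) one_pos).ne'
  have : Nonempty X := nonempty_of_isProbabilityMeasure μ
  obtain ⟨A, hAc, hAne, hAμ⟩ := hXf.exists_isClopen_nonempty_measure_lt μ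
    (ENNReal.div_pos (ENNReal.half_pos hδ).ne' (ENNReal.natCast_ne_top h))
  have hAh : h * μ A ≤ δ / 2 := by
    rw [mul_comm]; exact ((ENNReal.lt_div_iff_mul_lt (by simp [hpos.ne']) (by simp)).mp hAμ).le
  obtain ⟨N, hN⟩ := Ergodic.exists_lt_measure_accumulate_preimage_iterate
    ⟨hT, preErgodic_of_forall_measure_eq_zero_or_compl hTerg⟩
    hAc.isOpen.measurableSet.nullMeasurableSet (hfull A hAc.isOpen hAne)
    (r := 1 - δ / 2) (by
      rw [measure_univ]; exact ENNReal.sub_lt_self ENNReal.one_ne_top one_ne_zero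
        (ENNReal.half_pos hδ).ne')
  set B := rohlinBase T A h (N / h)
  have hB : IsClopen B := hAc.rohlinBase T.continuous h _
  have hdisj := pairwise_disjoint_image_iterate_rohlinBase (f := T) (s := A) h (N / h)
  refine ⟨B, hB, hdisj, ?_⟩
  have htower : μ (⋃ i : Fin h, (T.toEquiv ^ (i : ℕ)) '' B) = h * μ B :=
    MeasurePreserving.measure_iUnion_image_pow (e := T.toMeasurableEquiv) hT
      hB.isOpen.measurableSet hdisj
  refine (tsub_le_tsub_left (min_le_left _ _) 1).trans_lt
    (ENNReal.one_sub_lt_of_one_sub_half_lt (min_le_right _ _) hN ?_ hAh)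
  rw [htower, ← mul_add]
  exact hT.measure_accumulate_preimage_iterate_le hpos N

/-- **Lemma 6 of del Junco–Şahin (clopen Rohlin lemma).** If `T` is an ergodic
measure-preserving homeomorphism of a fractured Polish space with a non-atomic fully
supported probability measure, then for every `h ≥ 1` and `ε > 0` there is a clopen set `B`
such that `B, TB, …, T^{h-1}B` are pairwise disjoint and cover more than `1 - ε` of `X`. -/
theorem clopen_rohlin_lemma
    {X : Type*} [TopologicalSpace X] [PolishSpace X] [MeasurableSpace X] [BorelSpace X]
    (hXf : Fractured X)
    (μ : Measure X) [IsProbabilityMeasure μ] [NullSingletonClass μ]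
    (hfull : ∀ U : Set X, IsOpen U → U.Nonempty → μ U ≠ 0)
    (T : X ≃ₜ X) (hT : MeasurePreserving T μ μ)
    (hTerg : ∀ A : Set X, MeasurableSet A → T ⁻¹' A = A → μ A = 0 ∨ μ Aᶜ = 0)
    (h : ℕ) (hpos : 0 < h) (ε : ℝ) (hε : 0 < ε) :
    ∃ B : Set X, IsClopen B ∧
      Pairwise (Function.onFun Disjoint (fun i : Fin h => (T.toEquiv ^ (i : ℕ)) '' B)) ∧
      μ (⋃ i : Fin h, (T.toEquiv ^ (i : ℕ)) '' B) > 1 - ENNReal.ofReal ε :=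
  clopen_rohlin_lemma_general hXf μ hfull T hT hTerg h hpos ε hε
end
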